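/- arXiv:2604.10266 — 6 statements merged into one kernel-verified Lean document; each statement's English description precedes it below -/
import Mathlib

section
/- Let b : [0,∞) → ℝ be a continuous function, let x₀ ∈ ℝ, and let g₁, g₂ : [0,∞) → ℝ and f₁, f₂, h₁, h₂ : ℝ → ℝ be continuous functions such that (a) 0 < g₁(t) < g₂(t) for all t ≥ 0, (b) 0 < f₁(x) < f₂(x) for all x ∈ ℝ, and (c) h₁(x) ≤ h₂(x) for all x ∈ ℝ. Suppose x¹, x² : [0,∞) → ℝ are continuous functions satisfying xⁱ_t = x₀ + ∫₀^t gᵢ(s) fᵢ(xⁱ_s) ds + ∫₀^t hᵢ(xⁱ_s) ds + b(t) for all t ≥ 0, i = 1, 2. Then x¹_t < x²_t for all t > 0. -/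
open MeasureTheory Filter Set
open Topology

/-- **Comparison criterion** (Proposition 2.1). Let `b` be continuous on `[0,∞)`,
`g₁, g₂` continuous on `[0,∞)`, `f₁, f₂, h₁, h₂` continuous on `ℝ`, with
`0 < g₁ < g₂`, `0 < f₁ < f₂`, `h₁ ≤ h₂`.  If continuous `x¹, x²` satisfy
`xⁱ_t = x₀ + ∫₀ᵗ gᵢ(s) fᵢ(xⁱ_s) ds + ∫₀ᵗ hᵢ(xⁱ_s) ds + b(t)` for `t ≥ 0`,
then `x¹_t < x²_t` for all `t > 0`. -/
theorem comparison_criterion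
    (b : ℝ → ℝ) (x₀ : ℝ) (g₁ g₂ : ℝ → ℝ) (f₁ f₂ h₁ h₂ : ℝ → ℝ)
    (hb : ContinuousOn b (Set.Ici 0))
    (hg₁c : ContinuousOn g₁ (Set.Ici 0)) (hg₂c : ContinuousOn g₂ (Set.Ici 0))
    (hf₁c : Continuous f₁) (hf₂c : Continuous f₂)
    (hh₁c : Continuous h₁) (hh₂c : Continuous h₂)
    (hg : ∀ t ≥ (0:ℝ), 0 < g₁ t ∧ g₁ t < g₂ t)
    (hf : ∀ x : ℝ, 0 < f₁ x ∧ f₁ x < f₂ x)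
    (hh : ∀ x : ℝ, h₁ x ≤ h₂ x)
    (x1 x2 : ℝ → ℝ)
    (hx1c : ContinuousOn x1 (Set.Ici 0)) (hx2c : ContinuousOn x2 (Set.Ici 0))
    (hx1 : ∀ t ≥ (0:ℝ),
      x1 t = x₀ + (∫ s in (0:ℝ)..t, g₁ s * f₁ (x1 s))
        + (∫ s in (0:ℝ)..t, h₁ (x1 s)) + b t)
    (hx2 : ∀ t ≥ (0:ℝ),
      x2 t = x₀ + (∫ s in (0:ℝ)..t, g₂ s * f₂ (x2 s))
        + (∫ s in (0:ℝ)..t, h₂ (x2 s)) + b t) :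
    ∀ t > (0:ℝ), x1 t < x2 t := by
  set D : ℝ → ℝ := fun t => x2 t - x1 t with hDdef
  set G : ℝ → ℝ :=
    fun s => (g₂ s * f₂ (x2 s) + h₂ (x2 s)) - (g₁ s * f₁ (x1 s) + h₁ (x1 s)) with hGdef
  -- continuity of the pieces
  have hA2c : ContinuousOn (fun s => g₂ s * f₂ (x2 s)) (Ici 0) :=
    hg₂c.mul (hf₂c.comp_continuousOn hx2c)
  have hA1c : ContinuousOn (fun s => g₁ s * f₁ (x1 s)) (Ici 0) :=
    hg₁c.mul (hf₁c.comp_continuousOn hx1c)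
  have hB2c : ContinuousOn (fun s => h₂ (x2 s)) (Ici 0) := hh₂c.comp_continuousOn hx2c
  have hB1c : ContinuousOn (fun s => h₁ (x1 s)) (Ici 0) := hh₁c.comp_continuousOn hx1c
  have hGc : ContinuousOn G (Ici 0) := (hA2c.add hB2c).sub (hA1c.add hB1c)
  have hDc : ContinuousOn D (Ici 0) := hx2c.sub hx1c
  have hsub : ∀ u v : ℝ, 0 ≤ u → 0 ≤ v → uIcc u v ⊆ Ici 0 := by
    intro u v hu hv s hs
    rcases Set.mem_uIcc.1 hs with h | h
    · exact le_trans hu h.1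
    · exact le_trans hv h.1
  -- interval integrability on subintervals of `[0,∞)`
  have hIntG : ∀ u v : ℝ, 0 ≤ u → 0 ≤ v → IntervalIntegrable G volume u v := fun u v hu hv =>
    (hGc.mono (hsub u v hu hv)).intervalIntegrable
  have hIntA2 : ∀ t : ℝ, 0 ≤ t →
      IntervalIntegrable (fun s => g₂ s * f₂ (x2 s)) volume 0 t := fun t ht =>
    (hA2c.mono (hsub 0 t le_rfl ht)).intervalIntegrable
  have hIntA1 : ∀ t : ℝ, 0 ≤ t →
      IntervalIntegrable (fun s => g₁ s * f₁ (x1 s)) volume 0 t := fun t ht =>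
    (hA1c.mono (hsub 0 t le_rfl ht)).intervalIntegrable
  have hIntB2 : ∀ t : ℝ, 0 ≤ t →
      IntervalIntegrable (fun s => h₂ (x2 s)) volume 0 t := fun t ht =>
    (hB2c.mono (hsub 0 t le_rfl ht)).intervalIntegrable
  have hIntB1 : ∀ t : ℝ, 0 ≤ t →
      IntervalIntegrable (fun s => h₁ (x1 s)) volume 0 t := fun t ht =>
    (hB1c.mono (hsub 0 t le_rfl ht)).intervalIntegrable
  -- the fundamental identity `D t = ∫₀ᵗ G`
  have hDeq : ∀ t : ℝ, 0 ≤ t → D t = ∫ s in (0:ℝ)..t, G s := by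
    intro t ht
    have e1 := hx1 t ht
    have e2 := hx2 t ht
    have hsplit : (∫ s in (0:ℝ)..t, G s)
        = ((∫ s in (0:ℝ)..t, g₂ s * f₂ (x2 s)) + ∫ s in (0:ℝ)..t, h₂ (x2 s))
          - ((∫ s in (0:ℝ)..t, g₁ s * f₁ (x1 s)) + ∫ s in (0:ℝ)..t, h₁ (x1 s)) := by
      rw [hGdef]
      rw [intervalIntegral.integral_sub ((hIntA2 t ht).add (hIntB2 t ht))
        ((hIntA1 t ht).add (hIntB1 t ht)),
        intervalIntegral.integral_add (hIntA2 t ht) (hIntB2 t ht),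
        intervalIntegral.integral_add (hIntA1 t ht) (hIntB1 t ht)]
    rw [hDdef]
    simp only [e1, e2, hsplit]
    ring
  -- additivity of `D` along `G`
  have hDadd : ∀ u v : ℝ, 0 ≤ u → 0 ≤ v → D v = D u + ∫ s in u..v, G s := by
    intro u v hu hv
    rw [hDeq u hu, hDeq v hv,
      ← intervalIntegral.integral_add_adjacent_intervals (hIntG 0 u le_rfl hu)
        (hIntG u v hu hv)]
  -- `G` is positive wherever the two solutions agree
  have hGpos : ∀ t : ℝ, 0 ≤ t → x1 t = x2 t → 0 < G t := by
    intro t ht heq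
    have h1 := hg t ht
    have h2 := hf (x1 t)
    have h3 := hh (x1 t)
    rw [hGdef]
    simp only [← heq]
    nlinarith [h1.1, h1.2, h2.1, h2.2, h3]
  -- solutions agree at 0
  have h0 : x1 0 = x2 0 := by
    have e1 := hx1 0 le_rfl
    have e2 := hx2 0 le_rfl
    simp [intervalIntegral.integral_same] at e1 e2
    rw [e1, e2]
  -- main argument by contradiction
  by_contra hcon
  push_neg at hcon
  obtain ⟨t₁, ht₁pos, ht₁⟩ := hcon
  set A : Set ℝ := {t : ℝ | 0 < t ∧ D t ≤ 0} with hAdef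
  have hAsub : A ⊆ Ici 0 := fun t h => h.1.le
  have hAne : A.Nonempty := ⟨t₁, ht₁pos, by simpa [hDdef] using sub_nonpos.2 ht₁⟩
  have hAbdd : BddBelow A := ⟨0, fun t h => h.1.le⟩
  set τ := sInf A with hτdef
  have hτ0 : 0 ≤ τ := le_csInf hAne fun t h => h.1.le
  -- positivity of D near 0
  have hG0 : 0 < G 0 := hGpos 0 le_rfl h0
  obtain ⟨ε₀, hε₀, hball₀⟩ :
      ∃ ε > (0:ℝ), Metric.ball (0:ℝ) ε ∩ Ici 0 ⊆ {s | 0 < G s} := by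
    have := (hGc 0 (self_mem_Ici)).eventually (p := fun y => 0 < y) (eventually_gt_nhds hG0)
    exact Metric.mem_nhdsWithin_iff.1 this
  have hDpos_small : ∀ t : ℝ, 0 < t → t < ε₀ → 0 < D t := by
    intro t htpos htε
    rw [hDeq t htpos.le]
    apply intervalIntegral.intervalIntegral_pos_of_pos_on (hIntG 0 t le_rfl htpos.le) _ htpos
    intro s hs
    exact hball₀ ⟨by simp [abs_of_pos hs.1]; linarith [hs.2], hs.1.le⟩
  have hτpos : 0 < τ := by
    have hlb : (ε₀ / 2) ≤ τ := by
      apply le_csInf hAne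
      intro t ht
      by_contra hlt
      push_neg at hlt
      exact absurd ht.2 (not_le.2 (hDpos_small t ht.1 (by linarith)))
    linarith
  -- D τ ≤ 0 by closedness
  have hτA : τ ∈ closure A := csInf_mem_closure hAne hAbdd
  have hDτle : D τ ≤ 0 := by
    have hC : IsClosed {t : ℝ | t ∈ Ici 0 ∧ D t ≤ 0} := by
      have := hDc.preimage_isClosed_of_isClosed isClosed_Ici (isClosed_Iic (a := (0:ℝ)))
      simpa [Set.inter_def, Set.preimage, Set.mem_Iic] using this
    have hAC : A ⊆ {t : ℝ | t ∈ Ici 0 ∧ D t ≤ 0} := fun t h => ⟨h.1.le, h.2⟩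
    exact ((closure_minimal hAC hC) hτA).2
  -- D positive on (0, τ)
  have hDmid : ∀ t : ℝ, 0 < t → t < τ → 0 < D t := by
    intro t htpos htτ
    by_contra hle
    push_neg at hle
    exact absurd (csInf_le hAbdd ⟨htpos, hle⟩) (not_le.2 htτ)
  -- D τ ≥ 0 by left continuity
  have hDτge : 0 ≤ D τ := by
    have hne : (𝓝[Ioo 0 τ] τ).NeBot := by
      rw [← mem_closure_iff_nhdsWithin_neBot, closure_Ioo hτpos.ne]
      exact ⟨hτ0, le_rfl⟩
    have htend : Tendsto D (𝓝[Ioo 0 τ] τ) (𝓝 (D τ)) :=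
      (hDc τ (by exact hτ0)).mono_left (nhdsWithin_mono τ (fun s hs => hs.1.le))
    exact ge_of_tendsto htend (eventually_nhdsWithin_of_forall fun s hs => (hDmid s hs.1 hs.2).le)
  have hDτ : D τ = 0 := le_antisymm hDτle hDτge
  have heqτ : x1 τ = x2 τ := by
    have : x2 τ - x1 τ = 0 := hDτ
    linarith
  -- G positive near τ, contradiction
  have hGτ : 0 < G τ := hGpos τ hτ0 heqτ
  obtain ⟨ε, hε, hball⟩ :
      ∃ ε > (0:ℝ), Metric.ball τ ε ∩ Ici 0 ⊆ {s | 0 < G s} := by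
    have := (hGc τ hτ0).eventually (p := fun y => 0 < y) (eventually_gt_nhds hGτ)
    exact Metric.mem_nhdsWithin_iff.1 this
  set u := max (τ / 2) (τ - ε / 2) with hudef
  have huτ : u < τ := by
    apply max_lt (by linarith) (by linarith)
  have hupos : 0 < u := lt_of_lt_of_le (by linarith) (le_max_left _ _)
  have hIpos : 0 ≤ ∫ s in u..τ, G s := by
    apply intervalIntegral.integral_nonneg huτ.le
    intro s hs
    apply le_of_lt
    apply hball
    constructor
    · have h1 : τ - ε / 2 ≤ u := le_max_right _ _
      simp only [Metric.mem_ball, Real.dist_eq]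
      rw [abs_sub_lt_iff]
      constructor <;> [linarith [hs.2]; linarith [hs.1]]
    · exact le_trans hupos.le hs.1
  have : 0 < D τ := by
    rw [hDadd u τ hupos.le hτ0]
    have := hDmid u hupos huτ
    linarith
  linarith [hDτ, this]
end

section
/- Fix 0 < ε₂ < ε₁ and T > 0. If X^{ε₁} and X^{ε₂} are continuous solutions on [0,T] of the ε₁- and ε₂-approximating equations respectively (with the same driver g), then X^{ε₂}_t > X^{ε₁}_t for all t ∈ (0,T]. -/
open MeasureTheory Filter Set

/-!
The difference `D = X² − X¹` no longer involves the driver `g`: it is the integral of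
`a (drift_{ε₂}(X²) − drift_{ε₁}(X¹)) − b D`, so `D` is differentiable with `D 0 = 0`. At a zero of
`D` the two solutions coincide, and there the drift with the smaller `ε` is strictly larger,
since `(s + ε)^{2H-1}` (as `2H − 1 ≤ 0`) and `1 / (x⁺ + ε)` both decrease in `ε`. Hence `D' > 0` at
every zero of `D`, and a function starting at `0` that crosses each of its zeros upwards stays
positive.
-/

/-- `X` is a continuous solution on `[0,T]` of the ε-approximating equation
`X_t = X₀ + a ∫₀ᵗ (s+ε)^{2H-1} / (X_s 1_{X_s>0} + ε) ds − b ∫₀ᵗ X_s ds + σ g(t)`. -/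
def approxSol (X₀ a b σ H : ℝ) (g : ℝ → ℝ) (T ε : ℝ) (X : ℝ → ℝ) : Prop :=
  ContinuousOn X (Set.Icc 0 T) ∧
    ∀ t ∈ Set.Icc (0:ℝ) T,
      X t = X₀ + a * (∫ s in (0:ℝ)..t,
            (s + ε) ^ (2 * H - 1) / ((if 0 < X s then X s else 0) + ε))
          - b * (∫ s in (0:ℝ)..t, X s) + σ * g t

open Topology

theorem pos_of_hasDerivWithinAt_of_pos_at_zeros {f f' : ℝ → ℝ} {a b : ℝ}
    (hf : ∀ x ∈ Icc a b, HasDerivWithinAt f (f' x) (Icc a b) x) (ha : 0 ≤ f a)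
    (hzero : ∀ x ∈ Icc a b, f x = 0 → 0 < f' x) :
    ∀ x ∈ Ioc a b, 0 < f x := by
  have hnonneg : ∀ x ∈ Icc a b, 0 ≤ f x := by
    have hle := image_le_of_deriv_right_lt_deriv_boundary' (f := -f) (f' := -f')
      (B := 0) (B' := 0)
      (fun x hx => (hf x hx).continuousWithinAt.neg)
      (fun x hx => ((hf x (Ico_subset_Icc_self hx)).mono_of_mem_nhdsWithin
        (Icc_mem_nhdsGE_of_mem hx)).neg)
      (by simpa using ha) continuousOn_const (fun x _ => hasDerivWithinAt_const x _ 0)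
      (fun x hx hfx => by simpa using hzero x (Ico_subset_Icc_self hx) (by simpa using hfx))
    exact fun x hx => by simpa using hle hx
  intro x hx
  refine (hnonneg x (Ioc_subset_Icc_self hx)).lt_of_ne' fun hfx => ?_
  -- at a zero `x`, all slopes from the left are `≤ 0`, yet they tend to `f' x > 0`
  have hsub : Ico a x ⊆ Icc a b \ {x} := fun z hz => ⟨⟨hz.1, hz.2.le.trans hx.2⟩, hz.2.ne⟩
  have hslope : ∀ᶠ z in 𝓝[Ico a x] x, 0 < slope f x z :=
    ((hasDerivWithinAt_iff_tendsto_slope.1 (hf x (Ioc_subset_Icc_self hx))).eventually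
      (Ioi_mem_nhds (hzero x (Ioc_subset_Icc_self hx) hfx))).filter_mono (nhdsWithin_mono _ hsub)
  have := right_nhdsWithin_Ico_neBot hx.1
  obtain ⟨z, hpos, hz⟩ := (hslope.and self_mem_nhdsWithin).exists
  rw [slope_def_field, hfx, sub_zero] at hpos
  exact hpos.not_ge <| div_nonpos_of_nonneg_of_nonpos
    (hnonneg z ⟨hz.1, hz.2.le.trans hx.2⟩) (sub_nonpos.2 hz.2.le)

theorem pos_of_eq_integral_of_pos_at_zeros {f f' : ℝ → ℝ} {a b : ℝ}
    (hf' : ContinuousOn f' (Icc a b)) (hf : ∀ x ∈ Icc a b, f x = ∫ s in a..x, f' s)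
    (hzero : ∀ x ∈ Icc a b, f x = 0 → 0 < f' x) :
    ∀ x ∈ Ioc a b, 0 < f x := by
  intro x hx
  have hderiv : ∀ y ∈ Icc a b, HasDerivWithinAt f (f' y) (Icc a b) y := by
    intro y hy
    have : Fact (y ∈ Icc a b) := ⟨hy⟩
    refine (intervalIntegral.integral_hasDerivWithinAt_right
      ((hf'.mono ?_).intervalIntegrable) (hf'.stronglyMeasurableAtFilter_nhdsWithin
        measurableSet_Icc y) (hf' y hy)).congr hf (hf y hy)
    rw [uIcc_of_le hy.1]
    exact Icc_subset_Icc_right hy.2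
  have ha : f a = 0 := by simpa using hf a ⟨le_rfl, hx.1.le.trans hx.2⟩
  exact pos_of_hasDerivWithinAt_of_pos_at_zeros hderiv ha.ge hzero x hx

noncomputable def approxDrift (H ε s x : ℝ) : ℝ :=
  (s + ε) ^ (2 * H - 1) / ((if 0 < x then x else 0) + ε)

theorem approxDrift_eq_max (H ε s x : ℝ) :
    approxDrift H ε s x = (s + ε) ^ (2 * H - 1) / (max 0 x + ε) := by
  rw [approxDrift, max_def_lt]

theorem approxDrift_lt_approxDrift {H ε₁ ε₂ s : ℝ} (hH : H ≤ 1 / 2) (hs : 0 ≤ s)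
    (hε₂ : 0 < ε₂) (hε : ε₂ < ε₁) (x : ℝ) :
    approxDrift H ε₁ s x < approxDrift H ε₂ s x := by
  rw [approxDrift_eq_max, approxDrift_eq_max]
  have := le_max_left 0 x
  calc (s + ε₁) ^ (2 * H - 1) / (max 0 x + ε₁)
      ≤ (s + ε₂) ^ (2 * H - 1) / (max 0 x + ε₁) :=
        div_le_div_of_nonneg_right
          (Real.rpow_le_rpow_of_nonpos (by linarith) (by linarith) (by linarith)) (by linarith)
    _ < (s + ε₂) ^ (2 * H - 1) / (max 0 x + ε₂) :=
        div_lt_div_of_pos_left (Real.rpow_pos_of_pos (by linarith) _) (by linarith)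
          (by linarith)

theorem ContinuousOn.approxDrift {X : ℝ → ℝ} {S : Set ℝ} (hX : ContinuousOn X S)
    (hS : S ⊆ Ici 0) {ε : ℝ} (hε : 0 < ε) (H : ℝ) :
    ContinuousOn (fun t => _root_.approxDrift H ε t (X t)) S := by
  simp only [approxDrift_eq_max]
  refine ContinuousOn.div ?_ ((continuousOn_const.sup hX).add continuousOn_const) ?_
  · exact (continuousOn_id.add continuousOn_const).rpow_const
      fun t ht => Or.inl (add_pos_of_nonneg_of_pos (hS ht) hε).ne'
  · intro t _
    exact (add_pos_of_nonneg_of_pos (le_max_left 0 (X t)) hε).ne'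

theorem approxSol.sub_eq_integral {X₀ a b σ H T ε₁ ε₂ : ℝ} {g X₁ X₂ : ℝ → ℝ}
    (h₁ : approxSol X₀ a b σ H g T ε₁ X₁) (h₂ : approxSol X₀ a b σ H g T ε₂ X₂)
    (hε₁ : 0 < ε₁) (hε₂ : 0 < ε₂) :
    ∀ t ∈ Icc 0 T, X₂ t - X₁ t = ∫ s in (0:ℝ)..t,
      (a * (approxDrift H ε₂ s (X₂ s) - approxDrift H ε₁ s (X₁ s)) - b * (X₂ s - X₁ s)) := by
  intro t ht
  have hsub : uIcc 0 t ⊆ Icc 0 T := by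
    rw [uIcc_of_le ht.1]
    exact Icc_subset_Icc_right ht.2
  have hint : ∀ {F : ℝ → ℝ}, ContinuousOn F (Icc 0 T) → IntervalIntegrable F volume 0 t :=
    fun hF => (hF.mono hsub).intervalIntegrable
  have hD₁ := hint (h₁.1.approxDrift Icc_subset_Ici_self hε₁ H)
  have hD₂ := hint (h₂.1.approxDrift Icc_subset_Ici_self hε₂ H)
  rw [intervalIntegral.integral_sub ((hD₂.sub hD₁).const_mul a)
      (((hint h₂.1).sub (hint h₁.1)).const_mul b),
    intervalIntegral.integral_const_mul, intervalIntegral.integral_const_mul,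
    intervalIntegral.integral_sub hD₂ hD₁, intervalIntegral.integral_sub (hint h₂.1) (hint h₁.1),
    h₁.2 t ht, h₂.2 t ht]
  simp only [approxDrift]
  ring

theorem approx_comparison_general
    (X₀ a b σ H : ℝ) (ha : 0 < a) (hH : H < 1/2) (g : ℝ → ℝ)
    (ε₁ ε₂ T : ℝ) (hε₂ : 0 < ε₂) (hε : ε₂ < ε₁)
    (X1 X2 : ℝ → ℝ)
    (h1 : approxSol X₀ a b σ H g T ε₁ X1)
    (h2 : approxSol X₀ a b σ H g T ε₂ X2) :
    ∀ t ∈ Set.Ioc (0:ℝ) T, X1 t < X2 t := by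
  have hε₁ : 0 < ε₁ := hε₂.trans hε
  have hcont : ContinuousOn (fun s => a * (approxDrift H ε₂ s (X2 s) -
      approxDrift H ε₁ s (X1 s)) - b * (X2 s - X1 s)) (Icc 0 T) :=
    (continuousOn_const.mul ((h2.1.approxDrift Icc_subset_Ici_self hε₂ H).sub
      (h1.1.approxDrift Icc_subset_Ici_self hε₁ H))).sub (continuousOn_const.mul (h2.1.sub h1.1))
  intro t ht
  refine sub_pos.1 (pos_of_eq_integral_of_pos_at_zeros hcont (h1.sub_eq_integral h2 hε₁ hε₂)
    (fun s hs hs0 => ?_) t ht)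
  rw [sub_eq_zero.1 hs0, sub_self, mul_zero, sub_zero]
  exact mul_pos ha (sub_pos.2 (approxDrift_lt_approxDrift hH.le hs.1 hε₂ hε _))

/-- **Comparison of approximations.** If `0 < ε₂ < ε₁` and `X¹, X²` solve the
`ε₁`- and `ε₂`-approximating equations on `[0,T]`, then `X²_t > X¹_t` on `(0,T]`. -/
theorem approx_comparison
    (X₀ a b σ H : ℝ) (hX₀ : 0 < X₀) (ha : 0 < a) (hb : 0 ≤ b) (hσ : 0 < σ)
    (hH0 : 0 < H) (hH : H < 1/2)
    (g : ℝ → ℝ) (hgc : ContinuousOn g (Set.Ici 0)) (hg0 : g 0 = 0)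
    (ε₁ ε₂ T : ℝ) (hε₂ : 0 < ε₂) (hε : ε₂ < ε₁) (hT : 0 < T)
    (X1 X2 : ℝ → ℝ)
    (h1 : approxSol X₀ a b σ H g T ε₁ X1)
    (h2 : approxSol X₀ a b σ H g T ε₂ X2) :
    ∀ t ∈ Set.Ioc (0:ℝ) T, X1 t < X2 t :=
  approx_comparison_general X₀ a b σ H ha hH g ε₁ ε₂ T hε₂ hε X1 X2 h1 h2
end

section
/- Fix T > 0 and set C = X₀ + a T^{2H} / (H X₀). Then for every ε > 0 and every continuous solution X^ε of the ε-approximating equation on [0,T], one has X^ε_t ≤ C + 2σ sup_{s∈[0,T]} |g(s)| for all t ∈ [0,T]. -/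
open MeasureTheory Filter Set

set_option maxHeartbeats 1000000 in
/-- **Uniform upper bound** (Theorem 2.2). With `C = X₀ + a T^{2H}/(H X₀)`, every
solution of the ε-approximating equation on `[0,T]` satisfies
`X^ε_t ≤ C + 2σ sup_{s∈[0,T]} |g(s)|`. -/
theorem approx_uniform_bound
    (X₀ a b σ H : ℝ) (hX₀ : 0 < X₀) (ha : 0 < a) (hb : 0 ≤ b) (hσ : 0 < σ)
    (hH0 : 0 < H) (hH : H < 1/2)
    (g : ℝ → ℝ) (hgc : ContinuousOn g (Set.Ici 0)) (hg0 : g 0 = 0)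
    (T : ℝ) (hT : 0 < T) :
    ∀ ε > (0:ℝ), ∀ X : ℝ → ℝ, approxSol X₀ a b σ H g T ε X →
      ∀ t ∈ Set.Icc (0:ℝ) T,
        X t ≤ (X₀ + a * T ^ (2 * H) / (H * X₀))
          + 2 * σ * (⨆ s : Set.Icc (0:ℝ) T, |g (s : ℝ)|) := by
  intro ε hε X hX t ht
  obtain ⟨hXc, hXeq⟩ := hX
  set M : ℝ := ⨆ s : Set.Icc (0:ℝ) T, |g (s : ℝ)| with hMdef
  have hgC : ContinuousOn g (Set.Icc 0 T) := hgc.mono (fun x hx => hx.1)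
  -- sup bound for |g|
  have hbd : BddAbove (Set.range fun s : Set.Icc (0:ℝ) T => |g (s:ℝ)|) := by
    have := (isCompact_Icc.image_of_continuousOn hgC.abs).bddAbove
    rwa [Set.image_eq_range] at this
  have hgb : ∀ s ∈ Set.Icc (0:ℝ) T, |g s| ≤ M := fun s hs => le_ciSup hbd ⟨s, hs⟩
  have hM0 : 0 ≤ M := by
    have := hgb 0 ⟨le_refl 0, hT.le⟩
    have h0 : |g 0| = 0 := by simp [hg0]
    linarith [abs_nonneg (g 0), this]
  -- positivity of the constant term
  have hP : (0:ℝ) < T ^ (2 * H) := Real.rpow_pos_of_pos hT _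
  have hCpos : 0 ≤ a * T ^ (2 * H) / (H * X₀) := by positivity
  -- rewrite the indicator as a max
  have hiff : ∀ s : ℝ, (if 0 < X s then X s else 0) = max (X s) 0 := by
    intro s
    rcases lt_or_ge 0 (X s) with h | h
    · simp [h, max_eq_left h.le]
    · simp [not_lt.2 h, max_eq_right h]
  set F : ℝ → ℝ := fun s => (s + ε) ^ (2 * H - 1) / (max (X s) 0 + ε) with hFdef
  have hXeq' : ∀ r ∈ Set.Icc (0:ℝ) T,
      X r = X₀ + a * (∫ s in (0:ℝ)..r, F s) - b * (∫ s in (0:ℝ)..r, X s) + σ * g r := by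
    intro r hr
    have := hXeq r hr
    simpa only [hiff] using this
  -- X 0 = X₀
  have hX0 : X 0 = X₀ := by
    have := hXeq' 0 ⟨le_refl 0, hT.le⟩
    simpa [hg0] using this
  -- continuity of F
  have hF1 : ContinuousOn (fun s : ℝ => (s + ε) ^ (2 * H - 1)) (Set.Icc 0 T) := by
    apply ContinuousOn.rpow_const (by fun_prop)
    intro x hx
    left
    have : 0 < x + ε := by linarith [hx.1]
    exact this.ne'
  have hden : ∀ s : ℝ, 0 < max (X s) 0 + ε := by
    intro s; have := le_max_right (X s) 0; linarith
  have hF : ContinuousOn F (Set.Icc 0 T) :=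
    hF1.div ((hXc.sup continuousOn_const).add continuousOn_const)
      (fun s _ => (hden s).ne')
  have hFi : ∀ u v : ℝ, u ∈ Set.Icc (0:ℝ) T → v ∈ Set.Icc (0:ℝ) T →
      IntervalIntegrable F volume u v := fun u v hu hv =>
    (hF.mono (Set.uIcc_subset_Icc hu hv)).intervalIntegrable
  have hXi : ∀ u v : ℝ, u ∈ Set.Icc (0:ℝ) T → v ∈ Set.Icc (0:ℝ) T →
      IntervalIntegrable X volume u v := fun u v hu hv =>
    (hXc.mono (Set.uIcc_subset_Icc hu hv)).intervalIntegrable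
  have h0T : (0:ℝ) ∈ Set.Icc (0:ℝ) T := ⟨le_refl 0, hT.le⟩
  have hTT : T ∈ Set.Icc (0:ℝ) T := ⟨hT.le, le_refl T⟩
  -- main case split
  by_cases hXt : X t ≤ X₀
  · linarith [mul_nonneg (mul_nonneg (by norm_num : (0:ℝ) ≤ 2) hσ.le) hM0]
  push_neg at hXt
  -- the last time before t where X ≤ X₀
  set S : Set ℝ := Set.Icc 0 t ∩ X ⁻¹' Set.Iic X₀ with hSdef
  have hsub : Set.Icc (0:ℝ) t ⊆ Set.Icc (0:ℝ) T := Set.Icc_subset_Icc le_rfl ht.2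
  have hScl : IsClosed S :=
    (hXc.mono hsub).preimage_isClosed_of_isClosed isClosed_Icc isClosed_Iic
  have hScp : IsCompact S := isCompact_Icc.of_isClosed_subset hScl Set.inter_subset_left
  have hS0 : (0:ℝ) ∈ S := ⟨⟨le_refl 0, ht.1⟩, by simp [hX0]⟩
  set u : ℝ := sSup S with hudef
  have huS : u ∈ S := hScp.sSup_mem ⟨0, hS0⟩
  have hu0 : 0 ≤ u := huS.1.1
  have hut : u ≤ t := huS.1.2
  have hXu : X u ≤ X₀ := huS.2
  have hu' : u ∈ Set.Icc (0:ℝ) T := ⟨hu0, hut.trans ht.2⟩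
  have hunt : u < t := lt_of_le_of_ne hut (fun h => by rw [h] at hXu; linarith)
  have hkey : ∀ s : ℝ, u < s → s ≤ t → X₀ < X s := by
    intro s h1 h2
    by_contra h
    push_neg at h
    have hsS : s ∈ S := ⟨⟨hu0.trans h1.le, h2⟩, h⟩
    exact absurd (le_csSup hScp.bddAbove hsS) (not_le.2 h1)
  -- ae facts on [u,t]
  have hne : ∀ᵐ x ∂(volume.restrict (Set.Icc u t)), x ≠ u := by
    apply ae_restrict_of_ae
    rw [ae_iff]
    simpa using measure_singleton u
  have hmem : ∀ᵐ x ∂(volume.restrict (Set.Icc u t)), x ∈ Set.Icc u t :=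
    ae_restrict_mem measurableSet_Icc
  -- bound on the drift integral
  set G : ℝ → ℝ := fun s => (s + ε) ^ (2 * H - 1) / X₀ with hGdef
  have hG : ContinuousOn G (Set.Icc 0 T) := hF1.div_const _
  have hGi : ∀ v w : ℝ, v ∈ Set.Icc (0:ℝ) T → w ∈ Set.Icc (0:ℝ) T →
      IntervalIntegrable G volume v w := fun v w hv hw =>
    (hG.mono (Set.uIcc_subset_Icc hv hw)).intervalIntegrable
  have hFG : (∫ s in u..t, F s) ≤ ∫ s in u..t, G s := by
    apply intervalIntegral.integral_mono_ae_restrict hut (hFi u t hu' ht)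
      (hGi u t hu' ht)
    filter_upwards [hne, hmem] with x hx1 hx2
    have hx3 : X₀ < X x := hkey x (lt_of_le_of_ne hx2.1 (Ne.symm hx1)) hx2.2
    have hnum : 0 ≤ (x + ε) ^ (2 * H - 1) :=
      Real.rpow_nonneg (by linarith [hu0.trans hx2.1] : 0 ≤ x + ε) _
    have hd : X₀ ≤ max (X x) 0 + ε := by
      have := le_max_left (X x) 0; linarith
    exact div_le_div_of_nonneg_left hnum hX₀ hd
  have hGmono : (∫ s in u..t, G s) ≤ ∫ s in (0:ℝ)..T, G s := by
    apply intervalIntegral.integral_mono_interval hu0 hut ht.2 ?_ (hGi 0 T h0T hTT)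
    rw [Filter.EventuallyLE, ae_restrict_iff' measurableSet_Ioc]
    apply ae_of_all
    intro x hx
    have h1 : (0:ℝ) ≤ (x + ε) ^ (2 * H - 1) :=
      Real.rpow_nonneg (by linarith [hx.1] : 0 ≤ x + ε) _
    have : (0:ℝ) ≤ G x := div_nonneg h1 hX₀.le
    simpa using this
  have hGval : (∫ s in (0:ℝ)..T, G s) = ((T + ε) ^ (2 * H) - ε ^ (2 * H)) / (2 * H) / X₀ := by
    rw [hGdef]
    simp only [intervalIntegral.integral_div]
    congr 1
    have := intervalIntegral.integral_comp_add_right (a := (0:ℝ)) (b := T)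
      (fun x : ℝ => x ^ (2 * H - 1)) ε
    rw [this, zero_add, integral_rpow (Or.inl (by linarith))]
    have h1 : 2 * H - 1 + 1 = 2 * H := by ring
    rw [h1]
  have hsubadd : (T + ε) ^ (2 * H) - ε ^ (2 * H) ≤ T ^ (2 * H) := by
    have h := NNReal.rpow_add_le_add_rpow (Real.toNNReal T) (Real.toNNReal ε)
      (p := 2 * H) (by positivity) (by linarith)
    have h2 := NNReal.coe_le_coe.2 h
    push_cast at h2
    rw [Real.coe_toNNReal _ hT.le, Real.coe_toNNReal _ hε.le] at h2
    linarith
  -- nonnegativity of the mean-reversion integral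
  have hXnn : (0:ℝ) ≤ ∫ s in u..t, X s := by
    apply intervalIntegral.integral_nonneg_of_ae_restrict hut
    filter_upwards [hne, hmem] with x hx1 hx2
    have hx3 : X₀ < X x := hkey x (lt_of_le_of_ne hx2.1 (Ne.symm hx1)) hx2.2
    show (0:ℝ) ≤ X x
    linarith
  -- combine the equation at t and u
  have e1 := hXeq' t ht
  have e2 := hXeq' u hu'
  have hsplitF : (∫ s in (0:ℝ)..t, F s) - (∫ s in (0:ℝ)..u, F s) = ∫ s in u..t, F s :=
    intervalIntegral.integral_interval_sub_left (hFi 0 t h0T ht) (hFi 0 u h0T hu')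
  have hsplitX : (∫ s in (0:ℝ)..t, X s) - (∫ s in (0:ℝ)..u, X s) = ∫ s in u..t, X s :=
    intervalIntegral.integral_interval_sub_left (hXi 0 t h0T ht) (hXi 0 u h0T hu')
  have hdiff : X t = X u + a * (∫ s in u..t, F s) - b * (∫ s in u..t, X s)
      + σ * (g t - g u) := by
    rw [← hsplitF, ← hsplitX]
    have : X t - X u = a * ((∫ s in (0:ℝ)..t, F s) - ∫ s in (0:ℝ)..u, F s)
        - b * ((∫ s in (0:ℝ)..t, X s) - ∫ s in (0:ℝ)..u, X s) + σ * (g t - g u) := by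
      rw [e1, e2]; ring
    linarith
  -- bound the drift term
  have hdrift : a * (∫ s in u..t, F s) ≤ a * T ^ (2 * H) / (H * X₀) := by
    have h1 : (∫ s in u..t, F s) ≤ ((T + ε) ^ (2 * H) - ε ^ (2 * H)) / (2 * H) / X₀ := by
      rw [← hGval]; exact hFG.trans hGmono
    have h2 : ((T + ε) ^ (2 * H) - ε ^ (2 * H)) / (2 * H) / X₀ ≤ T ^ (2 * H) / (2 * H) / X₀ := by
      gcongr
    have h3 : a * (T ^ (2 * H) / (2 * H) / X₀) ≤ a * T ^ (2 * H) / (H * X₀) := by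
      rw [div_div, mul_div_assoc]
      apply mul_le_mul_of_nonneg_left _ ha.le
      apply div_le_div_of_nonneg_left hP.le (by positivity)
      nlinarith
    calc a * (∫ s in u..t, F s) ≤ a * (T ^ (2 * H) / (2 * H) / X₀) := by
          apply mul_le_mul_of_nonneg_left (h1.trans h2) ha.le
      _ ≤ a * T ^ (2 * H) / (H * X₀) := h3
  -- bound the noise term
  have hnoise : σ * (g t - g u) ≤ 2 * σ * M := by
    have h1 := hgb t ht
    have h2 := hgb u hu'
    have : g t - g u ≤ 2 * M := by
      have := abs_le.1 h1
      have := abs_le.1 h2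
      linarith [(abs_le.1 h1).2, (abs_le.1 h2).1]
    nlinarith
  have hbterm : 0 ≤ b * ∫ s in u..t, X s := mul_nonneg hb hXnn
  linarith [hdiff, hdrift, hnoise, hbterm, hXu]
end

section
/- For every T > 0, the set {t ∈ [0,T] : X_t ≤ 0} has Lebesgue measure zero; that is, the limit process X is strictly positive almost everywhere on [0,∞). -/
open MeasureTheory Filter Set

/-!
On `{X ≤ 0}` the drift integrands `(s+ε)^{2H-1} / (max X^ε_s 0 + ε)` blow up as `ε ↓ 0`, while
their integrals over `[0,T]` stay bounded: solving the equation at time `T` for the drift integral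
controls it by `X^ε_T`, `∫₀ᵀ X^ε` and `g`, and `X^ε` is bounded above uniformly in `ε ≤ 1` since
above level `1` the drift is at most `(s+ε)^{2H-1}` and the term `-b X` only pushes down.
Fatou's lemma then makes the blow-up set null.
-/

open Topology ENNReal

section Fatou

variable {α : Type*} [MeasurableSpace α] {μ : Measure α} {A : Set α}

theorem measure_eq_zero_of_tendsto_top_of_lintegral_le {f : ℕ → α → ℝ≥0∞} {C : ℝ≥0∞}
    (hf : ∀ n, AEMeasurable (f n) μ) (hC : ∀ n, ∫⁻ x, f n x ∂μ ≤ C) (hC_top : C ≠ ∞)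
    (hA : ∀ᵐ x ∂μ, x ∈ A → Tendsto (fun n => f n x) atTop (𝓝 ∞)) : μ A = 0 := by
  have hmeas : AEMeasurable (fun x => liminf (fun n => f n x) atTop) μ := by
    simp_rw [liminf_eq_iSup_iInf_of_nat]
    exact AEMeasurable.iSup fun n => AEMeasurable.biInf _ (to_countable _) fun i _ => hf i
  have hfin : ∫⁻ x, liminf (fun n => f n x) atTop ∂μ ≠ ∞ :=
    ((lintegral_liminf_le' hf).trans
      (liminf_le_of_frequently_le' (Frequently.of_forall hC))).trans_lt hC_top.lt_top |>.ne
  rw [measure_eq_zero_iff_ae_notMem]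
  filter_upwards [ae_lt_top' hmeas hfin, hA] with x hx hxA hmem
  exact hx.ne (hxA hmem).liminf_eq

theorem measure_eq_zero_of_tendsto_atTop_of_integral_le {f : ℕ → α → ℝ} {C : ℝ}
    (hf : ∀ n, Integrable (f n) μ) (hf_nonneg : ∀ n, 0 ≤ᵐ[μ] f n)
    (hC : ∀ n, ∫ x, f n x ∂μ ≤ C)
    (hA : ∀ᵐ x ∂μ, x ∈ A → Tendsto (fun n => f n x) atTop atTop) : μ A = 0 :=
  measure_eq_zero_of_tendsto_top_of_lintegral_le (C := ENNReal.ofReal C)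
    (fun n => (hf n).aemeasurable.ennreal_ofReal)
    (fun n => by
      rw [← ofReal_integral_eq_lintegral_ofReal (hf n) (hf_nonneg n)]
      exact ENNReal.ofReal_le_ofReal (hC n))
    ENNReal.ofReal_ne_top
    (hA.mono fun _ hx hxA => ENNReal.tendsto_ofReal_atTop.comp (hx hxA))

end Fatou

section Drift

variable {H ε s x : ℝ}

noncomputable def drift (H ε s x : ℝ) : ℝ := (s + ε) ^ (2 * H - 1) / (max x 0 + ε)

theorem drift_nonneg (hs : 0 ≤ s) (hε : 0 < ε) : 0 ≤ drift H ε s x :=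
  div_nonneg (Real.rpow_nonneg (by linarith) _) (by positivity)

theorem drift_le_rpow (hs : 0 ≤ s) (hε : 0 ≤ ε) (hx : 1 ≤ x) :
    drift H ε s x ≤ (s + ε) ^ (2 * H - 1) :=
  div_le_self (Real.rpow_nonneg (by linarith) _) (by linarith [le_max_left x 0])

theorem ContinuousOn.drift {X : ℝ → ℝ} {K : Set ℝ} (hX : ContinuousOn X K) (hK : K ⊆ Ici 0)
    (hε : 0 < ε) : ContinuousOn (fun s => drift H ε s (X s)) K := by
  refine ContinuousOn.div ?_ ((hX.sup continuousOn_const).add continuousOn_const)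
    fun s _ => by positivity
  exact (continuousOn_id.add continuousOn_const).rpow_const
    fun s hs => Or.inl (by have : (0 : ℝ) ≤ s := hK hs; dsimp; linarith)

theorem tendsto_drift_atTop {ι : Type*} {l : Filter ι} {e y : ι → ℝ} (hs : 0 < s) (hx : x ≤ 0)
    (he : Tendsto e l (𝓝[>] 0)) (hy : Tendsto y l (𝓝 x)) :
    Tendsto (fun i => drift H (e i) s (y i)) l atTop := by
  have he₀ : Tendsto e l (𝓝 0) := tendsto_nhds_of_tendsto_nhdsWithin he
  have hnum : Tendsto (fun i => (s + e i) ^ (2 * H - 1)) l (𝓝 (s ^ (2 * H - 1))) := by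
    have := (Real.continuousAt_rpow_const s (2 * H - 1) (Or.inl hs.ne')).tendsto
    exact this.comp (by simpa using (tendsto_const_nhds (x := s)).add he₀)
  have hden : Tendsto (fun i => max (y i) 0 + e i) l (𝓝[>] 0) := by
    refine tendsto_nhdsWithin_of_tendsto_nhds_of_eventually_within _ ?_ ?_
    · simpa [max_eq_right hx] using (hy.max (tendsto_const_nhds (x := (0 : ℝ)))).add he₀
    · filter_upwards [he.eventually eventually_mem_nhdsWithin] with i (hi : 0 < e i)
      exact add_pos_of_nonneg_of_pos (le_max_right _ _) hi
  exact (hnum.pos_mul_atTop (Real.rpow_pos_of_pos hs _)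
    (tendsto_inv_nhdsGT_zero.comp hden)).congr fun i => (div_eq_mul_inv _ _).symm

end Drift

theorem integral_add_rpow_le {H ε u t : ℝ} (hH : 0 < H) (hε : 0 < ε) (hu : 0 ≤ u)
    (hut : u ≤ t) : ∫ s in u..t, (s + ε) ^ (2 * H - 1) ≤ (t + ε) ^ (2 * H) / (2 * H) := by
  have hpos : 0 < u + ε := by linarith
  rw [intervalIntegral.integral_comp_add_right (fun s => s ^ (2 * H - 1)),
    integral_rpow (Or.inr ⟨by linarith, fun h => by
      rw [uIcc_of_le (by linarith)] at h; linarith [h.1]⟩), sub_add_cancel]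
  gcongr
  exact sub_le_self _ (Real.rpow_nonneg hpos.le _)

theorem ContinuousOn.exists_le_and_lt_on_Ioc {f : ℝ → ℝ} {a b c : ℝ}
    (hf : ContinuousOn f (Icc a b)) (hab : a ≤ b) (ha : f a ≤ c) :
    ∃ u ∈ Icc a b, f u ≤ c ∧ ∀ s ∈ Ioc u b, c < f s := by
  set S := {s ∈ Icc a b | f s ≤ c}
  have hS : IsClosed S := hf.preimage_isClosed_of_isClosed isClosed_Icc isClosed_Iic
  have hSbdd : BddAbove S := bddAbove_Icc.mono fun _ hs => hs.1
  obtain ⟨huI, hu⟩ : sSup S ∈ S := hS.csSup_mem ⟨a, ⟨le_rfl, hab⟩, ha⟩ hSbdd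
  refine ⟨sSup S, huI, hu, fun s hs => not_le.mp fun hfs => ?_⟩
  exact (le_csSup hSbdd ⟨⟨huI.1.trans hs.1.le, hs.2⟩, hfs⟩).not_gt hs.1

namespace approxSol

variable {X₀ a b σ H T ε G t u : ℝ} {g X : ℝ → ℝ}

theorem eq_drift (h : approxSol X₀ a b σ H g T ε X) (ht : t ∈ Icc 0 T) :
    X t = X₀ + a * (∫ s in (0:ℝ)..t, drift H ε s (X s))
      - b * (∫ s in (0:ℝ)..t, X s) + σ * g t := by
  simpa only [drift, max_def_lt'] using h.2 t ht

theorem apply_zero (h : approxSol X₀ a b σ H g T ε X) (hT : 0 ≤ T) : X 0 = X₀ + σ * g 0 := by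
  simpa using h.eq_drift ⟨le_rfl, hT⟩

theorem sub_eq (h : approxSol X₀ a b σ H g T ε X) (hε : 0 < ε) (hu : 0 ≤ u) (hut : u ≤ t)
    (htT : t ≤ T) :
    X t - X u = a * (∫ s in u..t, drift H ε s (X s)) - b * (∫ s in u..t, X s)
      + σ * (g t - g u) := by
  have hint : ∀ f : ℝ → ℝ, ContinuousOn f (Icc 0 T) → ∀ v ∈ Icc 0 T,
      IntervalIntegrable f volume 0 v := fun f hf v hv =>
    (hf.mono (Icc_subset_Icc_right hv.2)).intervalIntegrable_of_Icc hv.1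
  have hdrift := h.1.drift Icc_subset_Ici_self hε (H := H)
  have ht : t ∈ Icc 0 T := ⟨hu.trans hut, htT⟩
  have hu' : u ∈ Icc 0 T := ⟨hu, hut.trans htT⟩
  rw [h.eq_drift ht, h.eq_drift hu',
    ← intervalIntegral.integral_interval_sub_left (hint _ hdrift t ht) (hint _ hdrift u hu'),
    ← intervalIntegral.integral_interval_sub_left (hint _ h.1 t ht) (hint _ h.1 u hu')]
  ring

theorem apply_le_add_of_one_le (h : approxSol X₀ a b σ H g T ε X) (ha : 0 ≤ a) (hb : 0 ≤ b)
    (hH : 0 < H) (hε : 0 < ε) (hu : 0 ≤ u) (hut : u ≤ t) (htT : t ≤ T)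
    (hX : ∀ s ∈ Ioc u t, 1 ≤ X s) :
    X t ≤ X u + a * ((t + ε) ^ (2 * H) / (2 * H)) + σ * (g t - g u) := by
  have hcont : ∀ f : ℝ → ℝ, ContinuousOn f (Icc 0 T) → IntervalIntegrable f volume u t :=
    fun f hf => (hf.mono (Icc_subset_Icc hu htT)).intervalIntegrable_of_Icc hut
  have hdrift : ∫ s in u..t, drift H ε s (X s) ≤ ∫ s in u..t, (s + ε) ^ (2 * H - 1) := by
    refine intervalIntegral.integral_mono_ae_restrict hut
      (hcont _ (h.1.drift Icc_subset_Ici_self hε))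
      (hcont _ ((continuousOn_id.add continuousOn_const).rpow_const
        fun s hs => Or.inl (by dsimp; linarith [hs.1]))) ?_
    rw [← Measure.restrict_congr_set Ioc_ae_eq_Icc]
    filter_upwards [ae_restrict_mem measurableSet_Ioc] with s hs
    exact drift_le_rpow (hu.trans hs.1.le) hε.le (hX s hs)
  have hX_nonneg : 0 ≤ ∫ s in u..t, X s := by
    refine intervalIntegral.integral_nonneg_of_ae_restrict hut ?_
    rw [← Measure.restrict_congr_set Ioc_ae_eq_Icc]
    filter_upwards [ae_restrict_mem measurableSet_Ioc] with s hs
    exact zero_le_one.trans (hX s hs)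
  have := h.sub_eq hε hu hut htT
  nlinarith [integral_add_rpow_le hH hε hu hut, mul_nonneg hb hX_nonneg]

theorem apply_le_of_abs_le (h : approxSol X₀ a b σ H g T ε X) (ha : 0 ≤ a) (hb : 0 ≤ b)
    (hH : 0 < H) (hε₀ : 0 < ε) (hε₁ : ε ≤ 1) (hG : ∀ s ∈ Icc 0 T, |σ * g s| ≤ G)
    (ht : t ∈ Icc 0 T) :
    X t ≤ max (X 0) 1 + a * ((T + 1) ^ (2 * H) / (2 * H)) + 2 * G := by
  obtain ⟨u, hu, hXu, hlt⟩ := (h.1.mono (Icc_subset_Icc_right ht.2)).exists_le_and_lt_on_Ioc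
    ht.1 (le_max_left (X 0) 1)
  have hmain := h.apply_le_add_of_one_le ha hb hH hε₀ hu.1 hu.2 ht.2
    fun s hs => (le_max_right _ _).trans (hlt s hs).le
  have hpow : (t + ε) ^ (2 * H) / (2 * H) ≤ (T + 1) ^ (2 * H) / (2 * H) := by
    gcongr <;> linarith [ht.1, ht.2]
  have hgt := abs_le.mp (hG t ht)
  have hgu := abs_le.mp (hG u ⟨hu.1, hu.2.trans ht.2⟩)
  nlinarith [mul_le_mul_of_nonneg_left hpow ha]

theorem mul_integral_drift_le (h : approxSol X₀ a b σ H g T ε X) (hb : 0 ≤ b) (hT : 0 ≤ T)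
    {M : ℝ} (hM : ∀ t ∈ Icc 0 T, X t ≤ M) (hG : |σ * g T| ≤ G) :
    a * ∫ s in (0:ℝ)..T, drift H ε s (X s) ≤ M - X₀ + b * (T * M) + G := by
  have hXint : ∫ s in (0:ℝ)..T, X s ≤ T * M := by
    simpa using intervalIntegral.integral_mono_on hT (h.1.intervalIntegrable_of_Icc hT)
      (intervalIntegrable_const (μ := volume)) hM
  have := h.eq_drift ⟨hT, le_rfl⟩
  nlinarith [hM T ⟨hT, le_rfl⟩, (abs_le.mp hG).1, mul_le_mul_of_nonneg_left hXint hb]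

end approxSol

theorem limit_process_ae_positive_general
    (X₀ a b σ H : ℝ) (ha : 0 < a) (hb : 0 ≤ b)
    (hH0 : 0 < H)
    (g : ℝ → ℝ) (hgc : ContinuousOn g (Set.Ici 0))
    (Xe : ℝ → ℝ → ℝ)
    (hXe : ∀ ε > (0:ℝ), ∀ T > (0:ℝ), approxSol X₀ a b σ H g T ε (Xe ε))
    (X : ℝ → ℝ)
    (hX : ∀ t ≥ (0:ℝ),
      Tendsto (fun ε => Xe ε t) (nhdsWithin 0 (Set.Ioi 0)) (nhds (X t)))
    :
    ∀ T > (0:ℝ), volume {t ∈ Set.Icc (0:ℝ) T | X t ≤ 0} = 0 := by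
  intro T hT
  obtain ⟨G, hG⟩ := isCompact_Icc.exists_bound_of_continuousOn
    ((hgc.mono Icc_subset_Ici_self).const_smul σ)
  set e : ℕ → ℝ := fun n => 1 / (n + 1)
  have he_pos (n : ℕ) : 0 < e n := by positivity
  have he_le_one (n : ℕ) : e n ≤ 1 := div_le_one_of_le₀ (by simp) (by positivity)
  have he : Tendsto e atTop (𝓝[>] 0) := tendsto_nhdsWithin_of_tendsto_nhds_of_eventually_within _
    tendsto_one_div_add_atTop_nhds_zero_nat (.of_forall he_pos)
  have hsol (n : ℕ) := hXe (e n) (he_pos n) T hT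
  set M := max (X₀ + σ * g 0) 1 + a * ((T + 1) ^ (2 * H) / (2 * H)) + 2 * G
  have hM (n : ℕ) : ∀ t ∈ Icc 0 T, Xe (e n) t ≤ M := fun t ht => by
    simpa only [(hsol n).apply_zero hT.le] using
      (hsol n).apply_le_of_abs_le ha.le hb hH0 (he_pos n) (he_le_one n) hG ht
  have hsep : {t ∈ Icc 0 T | X t ≤ 0} = {t | X t ≤ 0} ∩ Icc 0 T := by ext; simp [and_comm]
  rw [hsep, ← Measure.restrict_apply' measurableSet_Icc]
  refine measure_eq_zero_of_tendsto_atTop_of_integral_le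
    (f := fun n s => drift H (e n) s (Xe (e n) s)) (C := (M - X₀ + b * (T * M) + G) / a)
    (fun n => ((hsol n).1.drift Icc_subset_Ici_self (he_pos n)).integrableOn_Icc)
    (fun n => (ae_restrict_iff' measurableSet_Icc).2 <|
      .of_forall fun s hs => drift_nonneg hs.1 (he_pos n))
    (fun n => ?_) ?_
  · rw [integral_Icc_eq_integral_Ioc, ← intervalIntegral.integral_of_le hT.le, le_div_iff₀' ha]
    exact (hsol n).mul_integral_drift_le hb hT.le (hM n) (hG T ⟨hT.le, le_rfl⟩)
  · rw [← Measure.restrict_congr_set Ioc_ae_eq_Icc]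
    filter_upwards [ae_restrict_mem measurableSet_Ioc] with s hs (hXs : X s ≤ 0)
    exact tendsto_drift_atTop hs.1 hXs he ((hX s hs.1.le).comp he)

/-- **Corollary 3.2, first part.** The limit process `X = lim_{ε↓0} X^ε` is
strictly positive almost everywhere: for every `T > 0` the set
`{t ∈ [0,T] : X_t ≤ 0}` has Lebesgue measure zero. -/
theorem limit_process_ae_positive
    (X₀ a b σ H : ℝ) (hX₀ : 0 < X₀) (ha : 0 < a) (hb : 0 ≤ b) (hσ : 0 < σ)
    (hH0 : 0 < H) (hH : H < 1/2)
    (g : ℝ → ℝ) (hgc : ContinuousOn g (Set.Ici 0)) (hg0 : g 0 = 0)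
    (Xe : ℝ → ℝ → ℝ)
    (hXe : ∀ ε > (0:ℝ), ∀ T > (0:ℝ), approxSol X₀ a b σ H g T ε (Xe ε))
    (X : ℝ → ℝ)
    (hX : ∀ t ≥ (0:ℝ),
      Tendsto (fun ε => Xe ε t) (nhdsWithin 0 (Set.Ioi 0)) (nhds (X t)))
    :
    ∀ T > (0:ℝ), volume {t ∈ Set.Icc (0:ℝ) T | X t ≤ 0} = 0 :=
  limit_process_ae_positive_general X₀ a b σ H ha hb hH0 g hgc Xe hXe X hX
end

section
/- Assume in addition that g is locally Hölder continuous of some order β ∈ (0, H), i.e., for every T > 0 there is C > 0 with |g(t) − g(s)| ≤ C|t−s|^β for all s,t ∈ [0,T]. Then {t ≥ 0 : X_t ≤ 0} = {t ≥ 0 : X_t = 0}; in particular, the limit process X is nonnegative on [0,∞). -/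
open MeasureTheory Filter Set

/-- Key quantitative lower bound for solutions of the approximating equation. -/
lemma approx_lower_bound
    (X₀ a b σ H : ℝ) (hX₀ : 0 < X₀) (ha : 0 < a) (hb : 0 ≤ b) (hσ : 0 < σ)
    (hH0 : 0 < H) (hH : H < 1/2)
    (g : ℝ → ℝ) (hg0 : g 0 = 0)
    (β : ℝ) (hβ0 : 0 < β) (hβ1 : β < 1)
    (ε T : ℝ) (hε : 0 < ε) (hT : 0 < T)
    (C : ℝ) (hC : 0 < C)
    (hgH : ∀ s ∈ Set.Icc (0:ℝ) T, ∀ t ∈ Set.Icc (0:ℝ) T, |g t - g s| ≤ C * |t - s| ^ β)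
    (Xf : ℝ → ℝ) (hsol : approxSol X₀ a b σ H g T ε Xf)
    (t : ℝ) (ht : t ∈ Set.Icc (0:ℝ) T) :
    -(σ * C * (((σ * C) / (a * (T + ε) ^ (2 * H - 1) / ε)) ^ (1/(1-β))) ^ β) ≤ Xf t := by
  obtain ⟨hcont, heq⟩ := hsol
  have hTε : (0:ℝ) < T + ε := by linarith
  set A : ℝ := a * (T + ε) ^ (2 * H - 1) / ε with hA
  have hApos : 0 < A := div_pos (mul_pos ha (Real.rpow_pos_of_pos hTε _)) hε
  set B : ℝ := σ * C with hB
  have hBpos : 0 < B := mul_pos hσ hC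
  set u₀ : ℝ := (B / A) ^ (1/(1-β)) with hu₀def
  have hu₀ : 0 ≤ u₀ := Real.rpow_nonneg (div_nonneg hBpos.le hApos.le) _
  set K : ℝ := B * u₀ ^ β with hK
  have hKnn : 0 ≤ K := mul_nonneg hBpos.le (Real.rpow_nonneg hu₀ _)
  by_contra hcon
  push_neg at hcon
  -- hcon : Xf t < -K
  have htneg : Xf t < 0 := lt_of_lt_of_le hcon (by linarith)
  have hX0 : Xf 0 = X₀ := by
    have h0 := heq 0 ⟨le_refl 0, hT.le⟩
    simpa [hg0] using h0
  have ht0 : 0 < t := by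
    rcases lt_or_eq_of_le ht.1 with h | h
    · exact h
    · exfalso; rw [← h, hX0] at htneg; linarith
  -- the set of zeros of Xf in [0,t]
  have hcont' : ContinuousOn Xf (Set.Icc 0 t) := hcont.mono (Icc_subset_Icc le_rfl ht.2)
  set S : Set ℝ := Set.Icc 0 t ∩ Xf ⁻¹' {0} with hS
  have hSne : S.Nonempty := by
    have h0m : (0:ℝ) ∈ Set.Icc (Xf t) (Xf 0) := ⟨htneg.le, by rw [hX0]; exact hX₀.le⟩
    obtain ⟨c, hc, hfc⟩ := intermediate_value_Icc' ht0.le hcont' h0m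
    exact ⟨c, hc, by simpa using hfc⟩
  have hSclosed : IsClosed S := hcont'.preimage_isClosed_of_isClosed isClosed_Icc isClosed_singleton
  have hSbdd : BddAbove S := BddAbove.mono (inter_subset_left) (bddAbove_Icc)
  set τ : ℝ := sSup S with hτdef
  have hτS : τ ∈ S := hSclosed.csSup_mem hSne hSbdd
  have hτIcc : τ ∈ Set.Icc 0 t := hτS.1
  have hXτ : Xf τ = 0 := by simpa using hτS.2
  have hτlt : τ < t := by
    rcases lt_or_eq_of_le hτIcc.2 with h | h
    · exact h
    · exfalso; rw [h] at hXτ; rw [hXτ] at htneg; exact lt_irrefl _ htneg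
  -- Xf is negative on (τ, t]
  have hneg : ∀ s ∈ Set.Ioc τ t, Xf s < 0 := by
    intro s hs
    by_contra hge
    push_neg at hge
    have hst : s ≤ t := hs.2
    have h0s : 0 ≤ s := le_trans hτIcc.1 hs.1.le
    have h0m : (0:ℝ) ∈ Set.Icc (Xf t) (Xf s) := ⟨htneg.le, hge⟩
    obtain ⟨c, hc, hfc⟩ := intermediate_value_Icc' hst (hcont'.mono (Icc_subset_Icc h0s le_rfl)) h0m
    have hcS : c ∈ S := ⟨⟨le_trans h0s hc.1, hc.2⟩, by simpa using hfc⟩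
    have : c ≤ τ := le_csSup hSbdd hcS
    have : τ < c := lt_of_lt_of_le hs.1 hc.1
    linarith
  have hle : ∀ s ∈ Set.Icc τ t, Xf s ≤ 0 := by
    intro s hs
    rcases eq_or_lt_of_le hs.1 with h | h
    · rw [← h, hXτ]
    · exact (hneg s ⟨h, hs.2⟩).le
  -- the drift integrand and its continuity
  set F : ℝ → ℝ := fun s => (s + ε) ^ (2 * H - 1) / ((if 0 < Xf s then Xf s else 0) + ε) with hF
  have hFmax : (fun s => (if 0 < Xf s then Xf s else 0)) = fun s => max (Xf s) 0 := by
    funext s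
    split_ifs with h
    · exact (max_eq_left h.le).symm
    · exact (max_eq_right (not_lt.mp h)).symm
  have hFc : ContinuousOn F (Set.Icc 0 T) := by
    apply ContinuousOn.div
    · apply ContinuousOn.rpow_const ((continuous_id.add continuous_const).continuousOn)
      intro s hs
      left
      have : (0:ℝ) < s + ε := by have h1 := hs.1; linarith
      exact ne_of_gt this
    · exact ContinuousOn.add (hFmax ▸ (hcont.sup continuousOn_const : ContinuousOn (fun s => max (Xf s) 0) (Set.Icc 0 T))) continuousOn_const
    · intro s hs
      have : ε ≤ (if 0 < Xf s then Xf s else 0) + ε := by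
        split_ifs with h <;> [linarith [h.le]; simp]
      exact ne_of_gt (lt_of_lt_of_le hε this)
  have hsubIcc : ∀ u v : ℝ, u ∈ Set.Icc (0:ℝ) T → v ∈ Set.Icc (0:ℝ) T → Set.uIcc u v ⊆ Set.Icc (0:ℝ) T :=
    fun u v hu hv => Set.uIcc_subset_Icc hu hv
  have hτT : τ ∈ Set.Icc (0:ℝ) T := ⟨hτIcc.1, le_trans hτIcc.2 ht.2⟩
  have hFi1 : IntervalIntegrable F volume 0 τ :=
    (hFc.mono (hsubIcc 0 τ ⟨le_rfl, hT.le⟩ hτT)).intervalIntegrable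
  have hFi2 : IntervalIntegrable F volume 0 t :=
    (hFc.mono (hsubIcc 0 t ⟨le_rfl, hT.le⟩ ht)).intervalIntegrable
  have hXi1 : IntervalIntegrable Xf volume 0 τ :=
    (hcont.mono (hsubIcc 0 τ ⟨le_rfl, hT.le⟩ hτT)).intervalIntegrable
  have hXi2 : IntervalIntegrable Xf volume 0 t :=
    (hcont.mono (hsubIcc 0 t ⟨le_rfl, hT.le⟩ ht)).intervalIntegrable
  have hFiτt : IntervalIntegrable F volume τ t :=
    (hFc.mono (hsubIcc τ t hτT ht)).intervalIntegrable
  have hXiτt : IntervalIntegrable Xf volume τ t :=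
    (hcont.mono (hsubIcc τ t hτT ht)).intervalIntegrable
  have e1 : (∫ s in (0:ℝ)..t, F s) - (∫ s in (0:ℝ)..τ, F s) = ∫ s in τ..t, F s :=
    intervalIntegral.integral_interval_sub_left hFi2 hFi1
  have e2 : (∫ s in (0:ℝ)..t, Xf s) - (∫ s in (0:ℝ)..τ, Xf s) = ∫ s in τ..t, Xf s :=
    intervalIntegral.integral_interval_sub_left hXi2 hXi1
  have et := heq t ht
  have eτ := heq τ hτT
  have hdiff : Xf t = a * (∫ s in τ..t, F s) - b * (∫ s in τ..t, Xf s) + σ * (g t - g τ) := by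
    have : Xf t - Xf τ = a * ((∫ s in (0:ℝ)..t, F s) - (∫ s in (0:ℝ)..τ, F s))
        - b * ((∫ s in (0:ℝ)..t, Xf s) - (∫ s in (0:ℝ)..τ, Xf s)) + σ * (g t - g τ) := by
      rw [et, eτ]; ring
    rw [e1, e2] at this
    rw [hXτ] at this
    linarith
  -- lower bound on the drift integral
  set c₀ : ℝ := (T + ε) ^ (2 * H - 1) / ε with hc₀
  have hc₀pos : 0 < c₀ := div_pos (Real.rpow_pos_of_pos hTε _) hε
  have hJf : (t - τ) * c₀ ≤ ∫ s in τ..t, F s := by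
    have hconst : (∫ _ in τ..t, c₀) = (t - τ) * c₀ := by
      rw [intervalIntegral.integral_const, smul_eq_mul]
    rw [← hconst]
    apply intervalIntegral.integral_mono_on hτlt.le (by simp) hFiτt
    intro s hs
    have hs0 : 0 ≤ s + ε := by
      have := le_trans hτIcc.1 hs.1; linarith
    have hsT : s + ε ≤ T + ε := by
      have := le_trans hs.2 ht.2; linarith
    have hnum : (T + ε) ^ (2 * H - 1) ≤ (s + ε) ^ (2 * H - 1) := by
      apply Real.rpow_le_rpow_of_nonpos (by linarith [le_trans hτIcc.1 hs.1]) hsT (by linarith)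
    have hind : (if 0 < Xf s then Xf s else 0) = 0 := by
      rw [if_neg (not_lt.mpr (hle s hs))]
    show c₀ ≤ F s
    rw [hF]
    dsimp only
    rw [hind, zero_add, hc₀]
    exact div_le_div_of_nonneg_right hnum hε.le
  -- the integral of Xf over [τ,t] is nonpositive
  have hJ2 : (∫ s in τ..t, Xf s) ≤ 0 := by
    have : (∫ s in τ..t, Xf s) ≤ ∫ _ in τ..t, (0:ℝ) := by
      apply intervalIntegral.integral_mono_on hτlt.le hXiτt (by simp)
      exact hle
    simpa using this
  -- Hölder bound on g
  set u : ℝ := t - τ with hu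
  have hupos : 0 < u := by simp [hu]; linarith
  have hgb : -(C * u ^ β) ≤ g t - g τ := by
    have habs := hgH τ hτT t ht
    rw [show |t - τ| = u by rw [abs_of_pos hupos]] at habs
    exact (abs_le.mp habs).1
  -- combine
  have hmain : A * u - B * u ^ β ≤ Xf t := by
    have h1 : a * ((t - τ) * c₀) ≤ a * ∫ s in τ..t, F s :=
      mul_le_mul_of_nonneg_left hJf ha.le
    have h2 : σ * (-(C * u ^ β)) ≤ σ * (g t - g τ) :=
      mul_le_mul_of_nonneg_left hgb hσ.le
    have h3 : b * (∫ s in τ..t, Xf s) ≤ 0 := mul_nonpos_of_nonneg_of_nonpos hb hJ2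
    have hAu : A * u = a * ((t - τ) * c₀) := by rw [hA, hc₀, hu]; ring
    have hBu : B * u ^ β = σ * (C * u ^ β) := by rw [hB]; ring
    rw [hdiff, hAu, hBu]
    linarith
  rcases le_or_gt u u₀ with hcase | hcase
  · have h4 : u ^ β ≤ u₀ ^ β := Real.rpow_le_rpow hupos.le hcase hβ0.le
    have h5 : B * u ^ β ≤ K := by rw [hK]; exact mul_le_mul_of_nonneg_left h4 hBpos.le
    have h6 : 0 ≤ A * u := mul_nonneg hApos.le hupos.le
    -- Xf t ≥ A u - B u^β ≥ -K, contradiction with hcon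
    have : -K ≤ Xf t := by linarith
    exact absurd hcon (not_lt.mpr this)
  · have h1β : (0:ℝ) < 1 - β := by linarith
    have hpow : B / A ≤ u ^ (1 - β) := by
      have h4 : u₀ ^ (1 - β) ≤ u ^ (1 - β) := Real.rpow_le_rpow hu₀ hcase.le h1β.le
      have h5 : u₀ ^ (1 - β) = B / A := by
        rw [hu₀def, ← Real.rpow_mul (div_nonneg hBpos.le hApos.le), one_div,
          inv_mul_cancel₀ (ne_of_gt h1β), Real.rpow_one]
      rw [← h5]; exact h4
    have h6 : B ≤ A * u ^ (1 - β) := by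
      rw [div_le_iff₀ hApos] at hpow
      linarith [hpow, mul_comm A (u ^ (1-β))]
    have h7 : B * u ^ β ≤ A * u := by
      have h8 : B * u ^ β ≤ A * u ^ (1 - β) * u ^ β :=
        mul_le_mul_of_nonneg_right h6 (Real.rpow_nonneg hupos.le _)
      have h9 : A * u ^ (1 - β) * u ^ β = A * u := by
        rw [mul_assoc, ← Real.rpow_add hupos, show (1 - β) + β = 1 by ring, Real.rpow_one]
      linarith
    have : -K ≤ Xf t := by linarith
    exact absurd hcon (not_lt.mpr this)

/-- **Corollary 3.2, second part.** If `g` is locally Hölder of order `β ∈ (0,H)`,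
then `{t ≥ 0 : X_t ≤ 0} = {t ≥ 0 : X_t = 0}`; in particular `X ≥ 0` on `[0,∞)`. -/
theorem limit_process_nonneg
    (X₀ a b σ H : ℝ) (hX₀ : 0 < X₀) (ha : 0 < a) (hb : 0 ≤ b) (hσ : 0 < σ)
    (hH0 : 0 < H) (hH : H < 1/2)
    (g : ℝ → ℝ) (hgc : ContinuousOn g (Set.Ici 0)) (hg0 : g 0 = 0)
    (Xe : ℝ → ℝ → ℝ)
    (hXe : ∀ ε > (0:ℝ), ∀ T > (0:ℝ), approxSol X₀ a b σ H g T ε (Xe ε))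
    (X : ℝ → ℝ)
    (hX : ∀ t ≥ (0:ℝ),
      Tendsto (fun ε => Xe ε t) (nhdsWithin 0 (Set.Ioi 0)) (nhds (X t)))
    (β : ℝ) (hβ0 : 0 < β) (hβH : β < H)
    (hgH : ∀ T > (0:ℝ), ∃ C > (0:ℝ), ∀ s ∈ Set.Icc (0:ℝ) T, ∀ t ∈ Set.Icc (0:ℝ) T,
      |g t - g s| ≤ C * |t - s| ^ β)
    :
    {t : ℝ | 0 ≤ t ∧ X t ≤ 0} = {t : ℝ | 0 ≤ t ∧ X t = 0} ∧
    ∀ t ≥ (0:ℝ), 0 ≤ X t := by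
  have hβ1 : β < 1 := by linarith
  have hnonneg : ∀ t ≥ (0:ℝ), 0 ≤ X t := by
    intro t ht
    set T : ℝ := t + 1 with hT
    have hTpos : 0 < T := by linarith
    obtain ⟨C, hC, hHold⟩ := hgH T hTpos
    set K : ℝ → ℝ := fun ε =>
      σ * C * (((σ * C) / (a * (T + ε) ^ (2 * H - 1) / ε)) ^ (1/(1-β))) ^ β with hKdef
    have hev : ∀ᶠ ε in nhdsWithin 0 (Set.Ioi 0), -(K ε) ≤ Xe ε t := by
      filter_upwards [eventually_mem_nhdsWithin] with ε hε
      exact approx_lower_bound X₀ a b σ H hX₀ ha hb hσ hH0 hH g hg0 β hβ0 hβ1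
        ε T hε hTpos C hC hHold (Xe ε) (hXe ε hε T hTpos) t ⟨ht, by linarith⟩
    have hKlim : Tendsto K (nhdsWithin 0 (Set.Ioi 0)) (nhds 0) := by
      set Q : ℝ → ℝ := fun ε => (σ * C) / (a * (T + ε) ^ (2 * H - 1) / ε) with hQdef
      have hQrw : ∀ ε ∈ Set.Ioi (0:ℝ),
          Q ε = σ * C / a * (ε * ((T + ε) ^ (2 * H - 1))⁻¹) := by
        intro ε hε
        have hε' : (0:ℝ) < ε := hε
        have hTE : (0:ℝ) < T + ε := by linarith
        have hp : (T + ε) ^ (2 * H - 1) ≠ 0 := ne_of_gt (Real.rpow_pos_of_pos hTE _)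
        rw [hQdef]
        field_simp
        try ring
      have hQlim : Tendsto Q (nhdsWithin 0 (Set.Ioi 0)) (nhds 0) := by
        have hbase : Tendsto (fun ε : ℝ => σ * C / a * (ε * ((T + ε) ^ (2 * H - 1))⁻¹))
            (nhdsWithin 0 (Set.Ioi 0)) (nhds 0) := by
          have h1 : Tendsto (fun ε : ℝ => ε) (nhdsWithin 0 (Set.Ioi 0)) (nhds 0) :=
            tendsto_id.mono_left nhdsWithin_le_nhds
          have h2 : Tendsto (fun ε : ℝ => ((T + ε) ^ (2 * H - 1))⁻¹)
              (nhdsWithin 0 (Set.Ioi 0)) (nhds ((T ^ (2 * H - 1))⁻¹)) := by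
            have hc : ContinuousAt (fun ε : ℝ => ((T + ε) ^ (2 * H - 1))⁻¹) 0 := by
              apply ContinuousAt.inv₀
              · apply ContinuousAt.rpow_const
                · exact (continuous_const.add continuous_id).continuousAt
                · left; simp; linarith
              · simp; exact ne_of_gt (Real.rpow_pos_of_pos hTpos _)
            have := hc.tendsto
            simp only [add_zero] at this
            exact this.mono_left nhdsWithin_le_nhds
          have h3 := (h1.mul h2).const_mul (σ * C / a)
          simpa using h3
        exact hbase.congr' (by
          filter_upwards [eventually_mem_nhdsWithin] with ε hε
          exact (hQrw ε hε).symm)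
      have h1βpos : (0:ℝ) < 1 - β := by linarith
      have hexp : (0:ℝ) ≤ 1/(1-β) := le_of_lt (div_pos one_pos h1βpos)
      have hz0 : (0:ℝ) ^ (1/(1-β)) = 0 := Real.zero_rpow (ne_of_gt (div_pos one_pos h1βpos))
      have hf1 : ContinuousAt (fun x : ℝ => x ^ (1/(1-β))) 0 :=
        Real.continuousAt_rpow_const 0 _ (Or.inr hexp)
      have hf2 : ContinuousAt (fun y : ℝ => y ^ β) ((fun x : ℝ => x ^ (1/(1-β))) 0) := by
        simp only [hz0]
        exact Real.continuousAt_rpow_const 0 _ (Or.inr hβ0.le)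
      have hcc : ContinuousAt ((fun y : ℝ => y ^ β) ∘ (fun x : ℝ => x ^ (1/(1-β)))) 0 :=
        ContinuousAt.comp (g := fun y : ℝ => y ^ β) (f := fun x : ℝ => x ^ (1/(1-β))) (x := 0) hf2 hf1
      have hcomp : ContinuousAt (fun x : ℝ => σ * C * ((x ^ (1/(1-β))) ^ β)) 0 :=
        ContinuousAt.mul continuousAt_const hcc
      have := (hcomp.tendsto).comp hQlim
      have hz : σ * C * (((0:ℝ) ^ (1/(1-β))) ^ β) = 0 := by
        rw [Real.zero_rpow (by positivity), Real.zero_rpow (ne_of_gt hβ0)]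
        ring
      rw [hz] at this
      exact this
    have hXt := hX t ht
    have hsum : Tendsto (fun ε => Xe ε t + K ε) (nhdsWithin 0 (Set.Ioi 0)) (nhds (X t + 0)) :=
      hXt.add hKlim
    have hle : 0 ≤ X t + 0 := by
      apply ge_of_tendsto hsum
      filter_upwards [hev] with ε hε
      linarith
    linarith
  refine ⟨?_, hnonneg⟩
  ext t
  simp only [Set.mem_setOf_eq]
  constructor
  · rintro ⟨h1, h2⟩
    exact ⟨h1, le_antisymm h2 (hnonneg t h1)⟩
  · rintro ⟨h1, h2⟩
    exact ⟨h1, le_of_eq h2⟩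
end

section
/- Let H ∈ (0, 1/2), a > 0, b ≥ 0, x₀ > 0, and let g : [0,∞) → ℝ be a continuous function with g(0) = 0 such that |g(t) − g(s)| ≤ C|t−s|^β for all s,t ∈ [0,1], for some constants C > 0 and β ∈ (0,H). Then there exists δ > 0 such that the equation x_t = x₀ + a∫₀^t s^{2H−1}/x_s ds − b∫₀^t x_s ds + g(t) has a continuous solution x : [0,δ] → [x₀/2, 2x₀] with x_0 = x₀, and this solution is unique among continuous functions on [0,δ] taking values in [x₀/2, 2x₀] with x_0 = x₀. -/
/-! The equation is the Volterra equation `x t = x₀ + g t + ∫₀ᵗ F(s, x s) ds` with kernel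
`F(s, y) = a s^(2H-1) / y - b y`. On the band `x₀/2 ≤ y ≤ 2x₀` this kernel is bounded and
Lipschitz in `y` with weight `k(s) = A s^(2H-1) + B`, integrable at `0` because `2H - 1 > -1`.
For small `δ`, `∫₀^δ k < 1` and `|g| ≤ x₀/4` on `[0, δ]` (continuity of `g` at `0`), so the
Picard map is a contraction of `C([0, δ])` keeping values in the band, and Banach's fixed-point
theorem gives both existence and uniqueness. -/

open MeasureTheory Filter Set Topology Function

noncomputable def clampExtend {δ m M : ℝ} (hδ : 0 ≤ δ) (hmM : m ≤ M) (f : C(Icc 0 δ, ℝ))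
    (s : ℝ) : ℝ :=
  projIcc m M hmM (IccExtend hδ f s)

section ClampExtend

variable {δ m M : ℝ} (hδ : 0 ≤ δ) (hmM : m ≤ M) (f g : C(Icc 0 δ, ℝ))

lemma clampExtend_mem (s : ℝ) : clampExtend hδ hmM f s ∈ Icc m M :=
  Subtype.prop _

lemma continuous_clampExtend : Continuous (clampExtend hδ hmM f) :=
  continuous_subtype_val.comp (continuous_projIcc.comp f.continuous.Icc_extend')

lemma abs_clampExtend_sub_le (s : ℝ) :
    |clampExtend hδ hmM f s - clampExtend hδ hmM g s| ≤ dist f g :=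
  (abs_projIcc_sub_projIcc hmM).trans <| by
    simpa [IccExtend, Real.dist_eq] using ContinuousMap.dist_apply_le_dist (f := f) (g := g) _

lemma clampExtend_of_mem {f : C(Icc 0 δ, ℝ)} (hf : ∀ t, f t ∈ Icc m M) {s : ℝ}
    (hs : s ∈ Icc 0 δ) : clampExtend hδ hmM f s = f ⟨s, hs⟩ := by
  rw [clampExtend, IccExtend_of_mem _ _ hs, projIcc_of_mem _ (hf _)]

end ClampExtend

/-- Conditions for Picard iteration on the Volterra equation `x t = h t + ∫₀ᵗ F s (x s) ds`
over `[0, δ]`, with solutions sought in the band `[m, M]`. -/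
structure IsVolterraContraction (F : ℝ → ℝ → ℝ) (k h : ℝ → ℝ) (δ m M : ℝ) : Prop where
  nonneg : 0 ≤ δ
  le : m ≤ M
  measurable : Measurable (uncurry F)
  intervalIntegrable : IntervalIntegrable k volume 0 δ
  abs_le_weight : ∀ s ∈ Ioc 0 δ, ∀ y ∈ Icc m M, |F s y| ≤ k s
  abs_sub_le_weight_mul :
    ∀ s ∈ Ioc 0 δ, ∀ y ∈ Icc m M, ∀ z ∈ Icc m M, |F s y - F s z| ≤ k s * |y - z|
  integral_lt_one : ∫ s in 0..δ, k s < 1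
  continuousOn : ContinuousOn h (Icc 0 δ)
  mapsTo : ∀ t ∈ Icc 0 δ, m + ∫ s in 0..δ, k s ≤ h t ∧ h t + ∫ s in 0..δ, k s ≤ M

structure IsVolterraSolution (F : ℝ → ℝ → ℝ) (h : ℝ → ℝ) (δ m M : ℝ) (x : ℝ → ℝ) : Prop where
  continuousOn : ContinuousOn x (Icc 0 δ)
  mapsTo : MapsTo x (Icc 0 δ) (Icc m M)
  eq : ∀ t ∈ Icc 0 δ, x t = h t + ∫ s in 0..t, F s (x s)

namespace IsVolterraContraction

variable {F : ℝ → ℝ → ℝ} {k h : ℝ → ℝ} {δ m M : ℝ}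

lemma weight_nonneg (hP : IsVolterraContraction F k h δ m M) {s : ℝ} (hs : s ∈ Ioc 0 δ) : 0 ≤ k s :=
  (abs_nonneg _).trans (hP.abs_le_weight s hs m (left_mem_Icc.2 hP.le))

lemma intervalIntegrable_of_mem (hP : IsVolterraContraction F k h δ m M) {t : ℝ}
    (ht : t ∈ Icc 0 δ) : IntervalIntegrable k volume 0 t :=
  hP.intervalIntegrable.mono_set (uIcc_subset_uIcc left_mem_uIcc (mem_uIcc_of_le ht.1 ht.2))

lemma integral_le (hP : IsVolterraContraction F k h δ m M) {t : ℝ} (ht : t ∈ Icc 0 δ) :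
    ∫ s in 0..t, k s ≤ ∫ s in 0..δ, k s :=
  intervalIntegral.integral_mono_interval le_rfl ht.1 ht.2
    ((ae_restrict_iff' measurableSet_Ioc).2 (ae_of_all _ fun _ hs ↦ hP.weight_nonneg hs))
    hP.intervalIntegrable

lemma integral_nonneg (hP : IsVolterraContraction F k h δ m M) : 0 ≤ ∫ s in 0..δ, k s := by
  simpa using hP.integral_le (left_mem_Icc.2 hP.nonneg)

lemma abs_integral_le_mul (hP : IsVolterraContraction F k h δ m M) {G : ℝ → ℝ} {c : ℝ}
    (hc : 0 ≤ c) (hG : ∀ s ∈ Ioc 0 δ, |G s| ≤ c * k s)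
    {t : ℝ} (ht : t ∈ Icc 0 δ) : |∫ s in 0..t, G s| ≤ c * ∫ s in 0..δ, k s :=
  calc |∫ s in 0..t, G s| ≤ ∫ s in 0..t, c * k s :=
        (Real.norm_eq_abs _).symm.trans_le <| intervalIntegral.norm_integral_le_of_norm_le ht.1
          (ae_of_all _ fun s hs ↦ hG s ⟨hs.1, hs.2.trans ht.2⟩)
          ((hP.intervalIntegrable_of_mem ht).const_mul c)
    _ = c * ∫ s in 0..t, k s := intervalIntegral.integral_const_mul c k
    _ ≤ c * ∫ s in 0..δ, k s := mul_le_mul_of_nonneg_left (hP.integral_le ht) hc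

lemma intervalIntegrable_comp (hP : IsVolterraContraction F k h δ m M) {φ : ℝ → ℝ}
    (hφ : Measurable φ) (hφm : ∀ s, φ s ∈ Icc m M)
    {t : ℝ} (ht : t ∈ Icc 0 δ) : IntervalIntegrable (fun s ↦ F s (φ s)) volume 0 t := by
  refine (hP.intervalIntegrable_of_mem ht).mono_fun'
    (hP.measurable.comp (measurable_id.prodMk hφ)).aestronglyMeasurable ?_
  rw [uIoc_of_le ht.1]
  exact (ae_restrict_iff' measurableSet_Ioc).2 <| ae_of_all _ fun s hs ↦
    hP.abs_le_weight s ⟨hs.1, hs.2.trans ht.2⟩ _ (hφm s)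

lemma continuousOn_integral_comp (hP : IsVolterraContraction F k h δ m M) {φ : ℝ → ℝ}
    (hφ : Measurable φ) (hφm : ∀ s, φ s ∈ Icc m M) :
    ContinuousOn (fun t ↦ ∫ s in 0..t, F s (φ s)) (Icc 0 δ) := by
  simpa [uIcc_of_le hP.nonneg] using intervalIntegral.continuousOn_primitive_interval'
    (hP.intervalIntegrable_comp hφ hφm (right_mem_Icc.2 hP.nonneg)) left_mem_uIcc

/-- Clamping into `[m, M]` makes the Picard map a contraction of the whole space
`C(Icc 0 δ, ℝ)`, not only of the maps with values in `[m, M]`. -/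
noncomputable def picardMap (hP : IsVolterraContraction F k h δ m M) (f : C(Icc 0 δ, ℝ)) :
    C(Icc 0 δ, ℝ) where
  toFun := (Icc 0 δ).domRestrict fun t ↦ h t + ∫ s in 0..t, F s (clampExtend hP.nonneg hP.le f s)
  continuous_toFun := (hP.continuousOn.add (hP.continuousOn_integral_comp
    (continuous_clampExtend _ _ f).measurable (clampExtend_mem _ _ f))).domRestrict

lemma picardMap_apply (hP : IsVolterraContraction F k h δ m M) (f : C(Icc 0 δ, ℝ)) (t : Icc 0 δ) :
    hP.picardMap f t = h t + ∫ s in 0..t, F s (clampExtend hP.nonneg hP.le f s) :=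
  rfl

lemma picardMap_mem (hP : IsVolterraContraction F k h δ m M) (f : C(Icc 0 δ, ℝ)) (t : Icc 0 δ) :
    hP.picardMap f t ∈ Icc m M := by
  have hI := _root_.abs_le.1 <| hP.abs_integral_le_mul zero_le_one
    (G := fun s ↦ F s (clampExtend hP.nonneg hP.le f s))
    (fun s hs ↦ by rw [one_mul]; exact hP.abs_le_weight s hs _ (clampExtend_mem _ _ f s)) t.2
  obtain ⟨hm, hM⟩ := hP.mapsTo t t.2
  rw [picardMap_apply]
  constructor <;> linarith [hI.1, hI.2]

lemma dist_picardMap_le (hP : IsVolterraContraction F k h δ m M) (f g : C(Icc 0 δ, ℝ)) :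
    dist (hP.picardMap f) (hP.picardMap g) ≤ (∫ s in 0..δ, k s) * dist f g := by
  refine (ContinuousMap.dist_le (mul_nonneg hP.integral_nonneg dist_nonneg)).2 fun t ↦ ?_
  have hint (f : C(Icc 0 δ, ℝ)) := hP.intervalIntegrable_comp
    (continuous_clampExtend hP.nonneg hP.le f).measurable (clampExtend_mem _ _ f) t.2
  rw [Real.dist_eq, picardMap_apply, picardMap_apply, add_sub_add_left_eq_sub,
    ← intervalIntegral.integral_sub (hint f) (hint g), mul_comm]
  refine hP.abs_integral_le_mul dist_nonneg (fun s hs ↦ ?_) t.2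
  calc _ ≤ k s * |clampExtend hP.nonneg hP.le f s - clampExtend hP.nonneg hP.le g s| :=
        hP.abs_sub_le_weight_mul s hs _ (clampExtend_mem _ _ f s) _ (clampExtend_mem _ _ g s)
    _ ≤ k s * dist f g :=
        mul_le_mul_of_nonneg_left (abs_clampExtend_sub_le _ _ f g s) (hP.weight_nonneg hs)
    _ = dist f g * k s := mul_comm _ _

lemma contractingWith_picardMap (hP : IsVolterraContraction F k h δ m M) :
    ContractingWith (∫ s in 0..δ, k s).toNNReal hP.picardMap := by
  refine ⟨Real.toNNReal_lt_one.2 hP.integral_lt_one, LipschitzWith.of_dist_le_mul fun f g ↦ ?_⟩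
  rw [Real.coe_toNNReal _ hP.integral_nonneg]
  exact hP.dist_picardMap_le f g

lemma isFixedPt_picardMap (hP : IsVolterraContraction F k h δ m M) {y : ℝ → ℝ}
    (hy : IsVolterraSolution F h δ m M y) :
    IsFixedPt hP.picardMap ⟨(Icc 0 δ).domRestrict y, hy.continuousOn.domRestrict⟩ := by
  ext ⟨t, ht⟩
  have hclamp : EqOn (clampExtend hP.nonneg hP.le ⟨_, hy.continuousOn.domRestrict⟩) y
      (uIcc 0 t) := fun s hs ↦ by
    rw [uIcc_of_le ht.1] at hs
    exact clampExtend_of_mem _ _ (fun u ↦ hy.mapsTo u.2) ⟨hs.1, hs.2.trans ht.2⟩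
  rw [picardMap_apply, intervalIntegral.integral_congr fun s hs ↦ by rw [hclamp hs]]
  exact (hy.eq t ht).symm

theorem exists_isVolterraSolution_eqOn (hP : IsVolterraContraction F k h δ m M) :
    ∃ x, IsVolterraSolution F h δ m M x ∧
      ∀ y, IsVolterraSolution F h δ m M y → EqOn y x (Icc 0 δ) := by
  have hT := hP.contractingWith_picardMap
  have : Nonempty C(Icc 0 δ, ℝ) := ⟨0⟩
  set x := ContractingWith.fixedPoint _ hT
  have hfix : IsFixedPt hP.picardMap x := hT.fixedPoint_isFixedPt
  have hclamp : ∀ t (ht : t ∈ Icc 0 δ), clampExtend hP.nonneg hP.le x t = x ⟨t, ht⟩ :=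
    fun t ↦ clampExtend_of_mem _ _ fun u ↦ hfix ▸ hP.picardMap_mem x u
  refine ⟨clampExtend hP.nonneg hP.le x, ⟨(continuous_clampExtend _ _ x).continuousOn,
    fun t _ ↦ clampExtend_mem _ _ x t, fun t ht ↦ ?_⟩, fun y hy t ht ↦ ?_⟩
  · rw [hclamp t ht]
    exact (DFunLike.congr_fun hfix _).symm
  · rw [hclamp t ht]
    exact DFunLike.congr_fun (hT.fixedPoint_unique (hP.isFixedPt_picardMap hy)) ⟨t, ht⟩

end IsVolterraContraction

lemma abs_div_sub_div_le {p q y z : ℝ} (hp : 0 ≤ p) (hq : 0 < q) (hy : q ≤ y) (hz : q ≤ z) :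
    |p / y - p / z| ≤ p / q ^ 2 * |y - z| := by
  have hy0 : 0 < y := hq.trans_le hy
  have hz0 : 0 < z := hq.trans_le hz
  have hyz : q ^ 2 ≤ y * z := by nlinarith
  have hsub : p / y - p / z = p * (z - y) / (y * z) := by field_simp
  rw [hsub, abs_div, abs_mul, abs_of_nonneg hp, abs_of_pos (mul_pos hy0 hz0), abs_sub_comm,
    div_mul_eq_mul_div]
  exact div_le_div_of_nonneg_left (by positivity) (by positivity) hyz

noncomputable def singularKernel (H a b s y : ℝ) : ℝ :=
  a * (s ^ (2 * H - 1) / y) - b * y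

/-- Dominates both `singularKernel H a b s` and its Lipschitz constant on `[x₀/2, 2x₀]`. -/
noncomputable def singularWeight (H a b x₀ s : ℝ) : ℝ :=
  |a| * (2 / x₀ + 4 / x₀ ^ 2) * s ^ (2 * H - 1) + |b| * (1 + 2 * x₀)

section SingularKernel

variable {H a b x₀ : ℝ}

lemma abs_singularKernel_le (hx₀ : 0 < x₀) {s y : ℝ} (hs : 0 ≤ s) (hy : y ∈ Icc (x₀ / 2) (2 * x₀)) :
    |singularKernel H a b s y| ≤ singularWeight H a b x₀ s := by
  have hp : 0 ≤ s ^ (2 * H - 1) := Real.rpow_nonneg hs _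
  have hy0 : 0 < y := by linarith [hy.1]
  have h1 : |s ^ (2 * H - 1) / y| ≤ 2 / x₀ * s ^ (2 * H - 1) := by
    rw [abs_of_nonneg (div_nonneg hp hy0.le), div_le_iff₀ hy0]
    calc s ^ (2 * H - 1) = 2 / x₀ * s ^ (2 * H - 1) * (x₀ / 2) := by field_simp
      _ ≤ 2 / x₀ * s ^ (2 * H - 1) * y := by gcongr; exact hy.1
  calc |singularKernel H a b s y| ≤ |a| * |s ^ (2 * H - 1) / y| + |b| * |y| := by
        rw [singularKernel, ← abs_mul, ← abs_mul]; exact abs_sub _ _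
    _ ≤ |a| * (2 / x₀ * s ^ (2 * H - 1)) + |b| * (2 * x₀) := by
        rw [abs_of_pos hy0]; gcongr; exact hy.2
    _ ≤ singularWeight H a b x₀ s := by
        rw [singularWeight]
        have : 0 ≤ |a| * (4 / x₀ ^ 2) * s ^ (2 * H - 1) := by positivity
        nlinarith [abs_nonneg b]

lemma abs_singularKernel_sub_le (hx₀ : 0 < x₀) {s y z : ℝ} (hs : 0 ≤ s)
    (hy : y ∈ Icc (x₀ / 2) (2 * x₀)) (hz : z ∈ Icc (x₀ / 2) (2 * x₀)) :
    |singularKernel H a b s y - singularKernel H a b s z|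
      ≤ singularWeight H a b x₀ s * |y - z| := by
  have hp : 0 ≤ s ^ (2 * H - 1) := Real.rpow_nonneg hs _
  have hsub : singularKernel H a b s y - singularKernel H a b s z
      = a * (s ^ (2 * H - 1) / y - s ^ (2 * H - 1) / z) - b * (y - z) := by
    simp only [singularKernel]; ring
  calc |singularKernel H a b s y - singularKernel H a b s z|
        ≤ |a| * |s ^ (2 * H - 1) / y - s ^ (2 * H - 1) / z| + |b| * |y - z| := by
        rw [hsub, ← abs_mul, ← abs_mul]; exact abs_sub _ _
    _ ≤ |a| * (4 / x₀ ^ 2 * s ^ (2 * H - 1) * |y - z|) + |b| * |y - z| := by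
        gcongr
        refine (abs_div_sub_div_le hp (half_pos hx₀) hy.1 hz.1).trans_eq ?_
        field_simp; ring
    _ ≤ singularWeight H a b x₀ s * |y - z| := by
        rw [singularWeight]
        have : 0 ≤ |a| * (2 / x₀) * s ^ (2 * H - 1) * |y - z| := by positivity
        have : 0 ≤ |b| * (2 * x₀) * |y - z| := by positivity
        nlinarith

lemma intervalIntegrable_singularWeight (hH : 0 < H) (u v : ℝ) :
    IntervalIntegrable (singularWeight H a b x₀) volume u v :=
  ((intervalIntegral.intervalIntegrable_rpow' (by linarith)).const_mul _).add
    intervalIntegrable_const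

lemma tendsto_integral_singularWeight (hH : 0 < H) :
    Tendsto (fun δ ↦ ∫ s in 0..δ, singularWeight H a b x₀ s) (𝓝 0) (𝓝 0) := by
  simpa using (intervalIntegral.continuous_primitive
    (intervalIntegrable_singularWeight hH) 0).tendsto 0

lemma integral_singularKernel (hH : 0 < H) {y : ℝ → ℝ} {t : ℝ} (ht : 0 ≤ t)
    (hyc : ContinuousOn y (Icc 0 t)) (hy0 : ∀ s ∈ Icc 0 t, y s ≠ 0) :
    ∫ s in 0..t, singularKernel H a b s (y s)
      = a * (∫ s in 0..t, s ^ (2 * H - 1) / y s) - b * ∫ s in 0..t, y s := by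
  have h1 : IntervalIntegrable (fun s ↦ s ^ (2 * H - 1) / y s) volume 0 t := by
    simpa only [div_eq_mul_inv] using (intervalIntegral.intervalIntegrable_rpow'
      (by linarith)).mul_continuousOn (by rw [uIcc_of_le ht]; exact hyc.inv₀ hy0)
  have h2 : IntervalIntegrable y volume 0 t := hyc.intervalIntegrable_of_Icc ht
  simp only [singularKernel]
  rw [intervalIntegral.integral_sub (h1.const_mul a) (h2.const_mul b),
    intervalIntegral.integral_const_mul, intervalIntegral.integral_const_mul]

lemma isVolterraContraction_singularKernel (hH : 0 < H) (hx₀ : 0 < x₀) {g : ℝ → ℝ} {δ : ℝ}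
    (hδ : 0 ≤ δ) (hg : ContinuousOn g (Icc 0 δ)) (hgx : ∀ t ∈ Icc 0 δ, |g t| ≤ x₀ / 4)
    (hk1 : ∫ s in 0..δ, singularWeight H a b x₀ s < 1)
    (hkx : ∫ s in 0..δ, singularWeight H a b x₀ s ≤ x₀ / 4) :
    IsVolterraContraction (singularKernel H a b) (singularWeight H a b x₀) (fun t ↦ x₀ + g t)
      δ (x₀ / 2) (2 * x₀) where
  nonneg := hδ
  le := by linarith
  measurable := by unfold uncurry singularKernel; fun_prop
  intervalIntegrable := intervalIntegrable_singularWeight hH 0 δ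
  abs_le_weight s hs y hy := abs_singularKernel_le hx₀ hs.1.le hy
  abs_sub_le_weight_mul s hs y hy z hz := abs_singularKernel_sub_le hx₀ hs.1.le hy hz
  integral_lt_one := hk1
  continuousOn := continuousOn_const.add hg
  mapsTo t ht := by
    obtain ⟨h1, h2⟩ := abs_le.1 (hgx t ht)
    constructor <;> linarith

end SingularKernel

lemma eventually_forall_Icc_abs_lt {g : ℝ → ℝ} (hg : ContinuousWithinAt g (Ici 0) 0)
    (hg0 : g 0 = 0) {ε : ℝ} (hε : 0 < ε) : ∀ᶠ δ in 𝓝[>] 0, ∀ t ∈ Icc 0 δ, |g t| < ε := by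
  have hsmall : ∀ᶠ t in 𝓝[≥] 0, |g t| < ε := by
    simpa [hg0, Real.dist_eq] using hg.eventually (Metric.ball_mem_nhds _ hε)
  obtain ⟨u, hu, hsub⟩ := mem_nhdsGE_iff_exists_Ico_subset.1 hsmall
  filter_upwards [Ioo_mem_nhdsGT hu] with δ hδ t ht
  exact hsub ⟨ht.1, ht.2.trans_lt hδ.2⟩

theorem local_existence_uniqueness_general
    (H a b x₀ : ℝ) (hH0 : 0 < H)
    (hx₀ : 0 < x₀)
    (g : ℝ → ℝ) (hgc : ContinuousOn g (Set.Ici 0)) (hg0 : g 0 = 0) :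
    ∃ δ > (0:ℝ), ∃ x : ℝ → ℝ,
      (ContinuousOn x (Set.Icc 0 δ) ∧
        (∀ t ∈ Set.Icc (0:ℝ) δ, x t ∈ Set.Icc (x₀ / 2) (2 * x₀)) ∧
        x 0 = x₀ ∧
        (∀ t ∈ Set.Icc (0:ℝ) δ,
          x t = x₀ + a * (∫ s in (0:ℝ)..t, s ^ (2 * H - 1) / x s)
            - b * (∫ s in (0:ℝ)..t, x s) + g t)) ∧
      (∀ y : ℝ → ℝ,
        ContinuousOn y (Set.Icc 0 δ) →
        (∀ t ∈ Set.Icc (0:ℝ) δ, y t ∈ Set.Icc (x₀ / 2) (2 * x₀)) →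
        y 0 = x₀ →
        (∀ t ∈ Set.Icc (0:ℝ) δ,
          y t = x₀ + a * (∫ s in (0:ℝ)..t, s ^ (2 * H - 1) / y s)
            - b * (∫ s in (0:ℝ)..t, y s) + g t) →
        ∀ t ∈ Set.Icc (0:ℝ) δ, y t = x t) := by
  have hx₀4 : 0 < x₀ / 4 := by positivity
  have hk : Tendsto (fun δ ↦ ∫ s in 0..δ, singularWeight H a b x₀ s) (𝓝[>] 0) (𝓝 0) :=
    (tendsto_integral_singularWeight hH0).mono_left nhdsWithin_le_nhds
  obtain ⟨δ, hδ, hk1, hkx, hgx⟩ := (eventually_mem_nhdsWithin.and <|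
    (hk.eventually (gt_mem_nhds one_pos)).and <| (hk.eventually (gt_mem_nhds hx₀4)).and <|
    eventually_forall_Icc_abs_lt (hgc.continuousWithinAt self_mem_Ici) hg0 hx₀4).exists
  obtain ⟨x, hx, huniq⟩ := (isVolterraContraction_singularKernel hH0 hx₀ hδ.le
    (hgc.mono Icc_subset_Ici_self) (fun t ht ↦ (hgx t ht).le) hk1
    hkx.le).exists_isVolterraSolution_eqOn
  have hsplit {y : ℝ → ℝ} (hyc : ContinuousOn y (Icc 0 δ))
      (hym : MapsTo y (Icc 0 δ) (Icc (x₀ / 2) (2 * x₀)))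
      {t : ℝ} (ht : t ∈ Icc 0 δ) : x₀ + g t + ∫ s in 0..t, singularKernel H a b s (y s)
        = x₀ + a * (∫ s in 0..t, s ^ (2 * H - 1) / y s) - b * (∫ s in 0..t, y s) + g t := by
    have hsub : Icc 0 t ⊆ Icc 0 δ := Icc_subset_Icc_right ht.2
    rw [integral_singularKernel hH0 ht.1 (hyc.mono hsub)
      fun s hs ↦ (by linarith [(hym (hsub hs)).1] : 0 < y s).ne']
    ring
  refine ⟨δ, hδ, x, ⟨hx.continuousOn, hx.mapsTo, ?_, fun t ht ↦ ?_⟩,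
    fun y hyc hym _ hy ↦ huniq y ⟨hyc, hym, fun t ht ↦ ?_⟩⟩
  · simpa [hg0] using hx.eq 0 (left_mem_Icc.2 hδ.le)
  · rw [hx.eq t ht, hsplit hx.continuousOn hx.mapsTo ht]
  · rw [hy t ht, hsplit hyc hym ht]

/-- **Lemma 3.6 (local existence and uniqueness).** Let `H ∈ (0,1/2)`, `a > 0`,
`b ≥ 0`, `x₀ > 0`, and let `g` be continuous with `g 0 = 0` and Hölder of order
`β ∈ (0,H)` on `[0,1]`.  Then there is `δ > 0` such that the equation
`x_t = x₀ + a∫₀ᵗ s^{2H-1}/x_s ds − b∫₀ᵗ x_s ds + g(t)` has a continuous solution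
on `[0,δ]` with values in `[x₀/2, 2x₀]` and `x_0 = x₀`, unique in that class. -/
theorem local_existence_uniqueness
    (H a b x₀ : ℝ) (hH0 : 0 < H) (hH : H < 1/2) (ha : 0 < a) (hb : 0 ≤ b)
    (hx₀ : 0 < x₀)
    (g : ℝ → ℝ) (hgc : ContinuousOn g (Set.Ici 0)) (hg0 : g 0 = 0)
    (C β : ℝ) (hC : 0 < C) (hβ0 : 0 < β) (hβH : β < H)
    (hgH : ∀ s ∈ Set.Icc (0:ℝ) 1, ∀ t ∈ Set.Icc (0:ℝ) 1,
      |g t - g s| ≤ C * |t - s| ^ β) :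
    ∃ δ > (0:ℝ), ∃ x : ℝ → ℝ,
      (ContinuousOn x (Set.Icc 0 δ) ∧
        (∀ t ∈ Set.Icc (0:ℝ) δ, x t ∈ Set.Icc (x₀ / 2) (2 * x₀)) ∧
        x 0 = x₀ ∧
        (∀ t ∈ Set.Icc (0:ℝ) δ,
          x t = x₀ + a * (∫ s in (0:ℝ)..t, s ^ (2 * H - 1) / x s)
            - b * (∫ s in (0:ℝ)..t, x s) + g t)) ∧
      (∀ y : ℝ → ℝ,
        ContinuousOn y (Set.Icc 0 δ) →
        (∀ t ∈ Set.Icc (0:ℝ) δ, y t ∈ Set.Icc (x₀ / 2) (2 * x₀)) →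
        y 0 = x₀ →
        (∀ t ∈ Set.Icc (0:ℝ) δ,
          y t = x₀ + a * (∫ s in (0:ℝ)..t, s ^ (2 * H - 1) / y s)
            - b * (∫ s in (0:ℝ)..t, y s) + g t) →
        ∀ t ∈ Set.Icc (0:ℝ) δ, y t = x t) :=
  local_existence_uniqueness_general H a b x₀ hH0 hx₀ g hgc hg0
end
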